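/- arXiv:1412.1415 — 7 statements merged into one kernel-verified Lean document; each statement's English description precedes it below -/
import Mathlib

section
/- Let S and T be compatible digraphs (same vertex set, disjoint edge sets) such that every directed cut of G = S ∪ T has at least two edges in S. If the underlying undirected graph S⁻ contains a cycle C, and E(S₁) can be partitioned into two dijoins of G₁ = G/E(C) where S₁ is the digraph of S-edges surviving contraction, then E(S) can be partitioned into two dijoins of G: indeed, orienting C and taking A₂ = forward edges of C, B₂ = backward edges of C, the sets A₁ ∪ A₂ and B₁ ∪ B₂ are disjoint dijoins of G whenever A₁, B₁ partition E(S₁) into two dijoins of G₁. -/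
/-- Edges leaving `X` (tail in `X`, head outside `X`). -/
def dicut {V E : Type} (tl hd : E → V) (X : Set V) : Set E :=
  {e | tl e ∈ X ∧ hd e ∉ X}

/-- `X` is an outset: nonempty, proper, and no edge enters `X`. -/
def IsOutset {V E : Type} (tl hd : E → V) (X : Set V) : Prop :=
  X ≠ ∅ ∧ X ≠ Set.univ ∧ ∀ e, hd e ∈ X → tl e ∈ X

/-- A dijoin meets every directed cut. -/
def IsDijoin {V E : Type} (tl hd : E → V) (D : Set E) : Prop :=
  ∀ X : Set V, IsOutset tl hd X → (D ∩ dicut tl hd X).Nonempty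

/-!
Every directed cut of `G` either keeps the cycle `C` on one side, and is then a directed cut of
`G / E(C)` met by `A₁` and by `B₁`, or it separates two vertices of `C`. In the second case,
going once around `C` one leaves and re-enters the shore `X`. The cycle edge on which one leaves
`X` cannot point into `X`, so it is a forward edge leaving `X`; the edge on which one re-enters
`X` likewise must be a backward edge leaving `X`.
-/

theorem ZMod.exists_and_not_succ {n : ℕ} [NeZero n] {P : ZMod n → Prop} {k m : ZMod n}
    (hk : P k) (hm : ¬ P m) : ∃ i, P i ∧ ¬ P (i + 1) := by
  by_contra! hsucc
  have hall : ∀ j : ℕ, P (k + j) := by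
    intro j
    induction j with
    | zero => simpa using hk
    | succ j ih => simpa [add_assoc] using hsucc _ ih
  have := hall (m - k).val
  rw [ZMod.natCast_zmod_val, add_sub_cancel] at this
  exact hm this

theorem Set.union_inter_union_sdiff_eq_empty {α : Type*} {A₁ B₁ A₂ R : Set α}
    (hU : A₁ ∪ B₁ = Rᶜ) (hI : A₁ ∩ B₁ = ∅) (hA₂ : A₂ ⊆ R) :
    (A₁ ∪ A₂) ∩ (B₁ ∪ (R \ A₂)) = ∅ := by
  rw [Set.eq_empty_iff_forall_notMem] at hI ⊢
  intro e
  have hUe := Set.ext_iff.mp hU e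
  have hA₂e := @hA₂ e
  have hIe := hI e
  simp only [Set.mem_inter_iff, Set.mem_union, Set.mem_sdiff, Set.mem_compl_iff] at *
  tauto

theorem Set.union_union_union_sdiff_eq_univ {α : Type*} {A₁ B₁ A₂ R : Set α}
    (hU : A₁ ∪ B₁ = Rᶜ) : (A₁ ∪ A₂) ∪ (B₁ ∪ (R \ A₂)) = Set.univ := by
  rw [Set.union_union_union_comm, hU]
  ext e
  by_cases e ∈ R <;> by_cases e ∈ A₂ <;> simp_all

section Cycle

variable {V E : Type} {tl hd : E → V} {n : ℕ} {c : ZMod n → V} {ce : ZMod n → E}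

def forwardEdges (tl hd : E → V) (c : ZMod n → V) (ce : ZMod n → E) : Set E :=
  {e | ∃ i, e = ce i ∧ tl e = c i ∧ hd e = c (i + 1)}

theorem forwardEdges_subset_range : forwardEdges tl hd c ce ⊆ Set.range ce := by
  rintro e ⟨i, rfl, -⟩
  exact ⟨i, rfl⟩

variable [NeZero n]
  (hends : ∀ i, (tl (ce i) = c i ∧ hd (ce i) = c (i + 1)) ∨
    (tl (ce i) = c (i + 1) ∧ hd (ce i) = c i))
  {X : Set V} (hX : ∀ e, hd e ∈ X → tl e ∈ X) {k m : ZMod n}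
include hends hX

theorem exists_forwardEdges_mem_dicut (hk : c k ∈ X) (hm : c m ∉ X) :
    ∃ e ∈ forwardEdges tl hd c ce, e ∈ dicut tl hd X := by
  obtain ⟨i, hi, hi₁⟩ := ZMod.exists_and_not_succ (P := (c · ∈ X)) hk hm
  rcases hends i with ⟨ht, hh⟩ | ⟨ht, hh⟩
  · exact ⟨ce i, ⟨i, rfl, ht, hh⟩, ht ▸ hi, hh ▸ hi₁⟩
  · exact absurd (ht ▸ hX (ce i) (hh ▸ hi)) hi₁

theorem exists_backwardEdges_mem_dicut (hinj : Function.Injective ce)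
    (hk : c k ∈ X) (hm : c m ∉ X) :
    ∃ e ∈ Set.range ce \ forwardEdges tl hd c ce, e ∈ dicut tl hd X := by
  obtain ⟨i, hi, hi₁⟩ := ZMod.exists_and_not_succ (P := (c · ∉ X)) hm (not_not_intro hk)
  rw [not_not] at hi₁
  rcases hends i with ⟨ht, hh⟩ | ⟨ht, hh⟩
  · exact absurd (ht ▸ hX (ce i) (hh ▸ hi₁)) hi
  · have hback : ce i ∉ forwardEdges tl hd c ce := by
      rintro ⟨j, hij, htj, -⟩
      obtain rfl := hinj hij
      exact hi (htj ▸ ht ▸ hi₁)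
    exact ⟨ce i, ⟨⟨i, rfl⟩, hback⟩, ht ▸ hi₁, hh ▸ hi⟩

end Cycle

theorem isDijoin_inl_image_union {V ES ET ι : Type} {tS hS : ES → V} {tT hT : ET → V}
    {c : ι → V} {D₁ D₂ : Set ES}
    (h₁ : ∀ X : Set V, X ≠ ∅ → X ≠ Set.univ →
      (Set.range c ⊆ X ∨ Disjoint (Set.range c) X) →
      (∀ e : ES ⊕ ET, Sum.elim hS hT e ∈ X → Sum.elim tS tT e ∈ X) →
      ∃ e ∈ D₁, tS e ∈ X ∧ hS e ∉ X)
    (h₂ : ∀ X : Set V, (∀ e, hS e ∈ X → tS e ∈ X) → ∀ k m, c k ∈ X → c m ∉ X →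
      ∃ e ∈ D₂, e ∈ dicut tS hS X) :
    IsDijoin (Sum.elim tS tT) (Sum.elim hS hT) (Sum.inl '' (D₁ ∪ D₂)) := by
  rintro X ⟨hX₀, hXuniv, hX⟩
  by_cases hc : Set.range c ⊆ X ∨ Disjoint (Set.range c) X
  · obtain ⟨e, he, hcut⟩ := h₁ X hX₀ hXuniv hc hX
    exact ⟨Sum.inl e, ⟨e, Or.inl he, rfl⟩, hcut⟩
  · rw [not_or] at hc
    obtain ⟨_, ⟨m, rfl⟩, hm⟩ := Set.not_subset.mp hc.1
    obtain ⟨_, ⟨k, rfl⟩, hk⟩ := Set.not_disjoint_iff.mp hc.2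
    obtain ⟨e, he, hcut⟩ := h₂ X (fun e => hX (Sum.inl e)) k m hk hm
    exact ⟨Sum.inl e, ⟨e, Or.inr he, rfl⟩, hcut⟩

/-- The directed cuts of `G₁ = G / E(C)` are encoded as the directed cuts of `G` whose shore
contains all of `range c` or none of it. -/
theorem stmt2_general {V ES ET : Type}
    (tS hS : ES → V) (tT hT : ET → V)
    -- the cycle C of S⁻ :
    (n : ℕ) (hn : 0 < n) (c : ZMod n → V)
    (ce : ZMod n → ES) (hceinj : Function.Injective ce)
    (hends : ∀ i : ZMod n, (tS (ce i) = c i ∧ hS (ce i) = c (i + 1)) ∨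
                           (tS (ce i) = c (i + 1) ∧ hS (ce i) = c i))
    -- A₁, B₁ partition E(S₁) = E(S) \ E(C) into two dijoins of G₁ = G/E(C) :
    (A₁ B₁ : Set ES)
    (hU : A₁ ∪ B₁ = {e : ES | e ∉ Set.range ce}) (hI : A₁ ∩ B₁ = ∅)
    (hA₁d : ∀ X : Set V, X ≠ ∅ → X ≠ Set.univ →
      (Set.range c ⊆ X ∨ Disjoint (Set.range c) X) →
      (∀ e : ES ⊕ ET, Sum.elim hS hT e ∈ X → Sum.elim tS tT e ∈ X) →
      ∃ e ∈ A₁, tS e ∈ X ∧ hS e ∉ X)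
    (hB₁d : ∀ X : Set V, X ≠ ∅ → X ≠ Set.univ →
      (Set.range c ⊆ X ∨ Disjoint (Set.range c) X) →
      (∀ e : ES ⊕ ET, Sum.elim hS hT e ∈ X → Sum.elim tS tT e ∈ X) →
      ∃ e ∈ B₁, tS e ∈ X ∧ hS e ∉ X) :
    -- conclusion, with A₂ the forward edges of C and B₂ the backward ones:
    (A₁ ∪ {e : ES | ∃ i, e = ce i ∧ tS e = c i ∧ hS e = c (i + 1)}) ∩
      (B₁ ∪ (Set.range ce \ {e : ES | ∃ i, e = ce i ∧ tS e = c i ∧ hS e = c (i + 1)})) = ∅ ∧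
    (A₁ ∪ {e : ES | ∃ i, e = ce i ∧ tS e = c i ∧ hS e = c (i + 1)}) ∪
      (B₁ ∪ (Set.range ce \ {e : ES | ∃ i, e = ce i ∧ tS e = c i ∧ hS e = c (i + 1)})) = Set.univ ∧
    IsDijoin (Sum.elim tS tT) (Sum.elim hS hT)
      (Sum.inl '' (A₁ ∪ {e : ES | ∃ i, e = ce i ∧ tS e = c i ∧ hS e = c (i + 1)})) ∧
    IsDijoin (Sum.elim tS tT) (Sum.elim hS hT)
      (Sum.inl '' (B₁ ∪ (Set.range ce \ {e : ES | ∃ i, e = ce i ∧ tS e = c i ∧ hS e = c (i + 1)}))) := by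
  have : NeZero n := NeZero.of_pos hn
  exact ⟨Set.union_inter_union_sdiff_eq_empty hU hI forwardEdges_subset_range,
    Set.union_union_union_sdiff_eq_univ hU,
    isDijoin_inl_image_union hA₁d fun _ hX _ _ hk hm =>
      exists_forwardEdges_mem_dicut hends hX hk hm,
    isDijoin_inl_image_union hB₁d fun _ hX _ _ hk hm =>
      exists_backwardEdges_mem_dicut hends hX hceinj hk hm⟩

/-- `S` has edges `ES` (tail `tS`, head `hS`), `T` has edges `ET`;
`G = S ∪ T` has edge type `ES ⊕ ET`.  Every directed cut of `G` has at least two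
`S`-edges.  `C` is a cycle of `S⁻` with vertices `c i` and edges `ce i` joining
`c i` to `c (i+1)`.  If `A₁, B₁` partition the `S`-edges off the cycle into two
dijoins of `G₁ = G/E(C)` (cuts of `G₁` = cuts of `G` at sets containing the cycle
vertices all on one side), then with `A₂` the forward cycle edges and `B₂` the
backward ones, `A₁ ∪ A₂` and `B₁ ∪ B₂` are disjoint dijoins of `G` partitioning `E(S)`. -/
theorem stmt2 {V ES ET : Type} [Fintype V] [Fintype ES] [Fintype ET]
    (tS hS : ES → V) (tT hT : ET → V)
    (hcut2 : ∀ X : Set V, IsOutset (Sum.elim tS tT) (Sum.elim hS hT) X →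
      ∃ e f : ES, e ≠ f ∧
        (Sum.inl e : ES ⊕ ET) ∈ dicut (Sum.elim tS tT) (Sum.elim hS hT) X ∧
        (Sum.inl f : ES ⊕ ET) ∈ dicut (Sum.elim tS tT) (Sum.elim hS hT) X)
    -- the cycle C of S⁻ :
    (n : ℕ) (hn : 0 < n) (c : ZMod n → V) (hcinj : Function.Injective c)
    (ce : ZMod n → ES) (hceinj : Function.Injective ce)
    (hends : ∀ i : ZMod n, (tS (ce i) = c i ∧ hS (ce i) = c (i + 1)) ∨
                           (tS (ce i) = c (i + 1) ∧ hS (ce i) = c i))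
    -- A₁, B₁ partition E(S₁) = E(S) \ E(C) into two dijoins of G₁ = G/E(C) :
    (A₁ B₁ : Set ES)
    (hU : A₁ ∪ B₁ = {e : ES | e ∉ Set.range ce}) (hI : A₁ ∩ B₁ = ∅)
    (hA₁d : ∀ X : Set V, X ≠ ∅ → X ≠ Set.univ →
      (Set.range c ⊆ X ∨ Disjoint (Set.range c) X) →
      (∀ e : ES ⊕ ET, Sum.elim hS hT e ∈ X → Sum.elim tS tT e ∈ X) →
      ∃ e ∈ A₁, tS e ∈ X ∧ hS e ∉ X)
    (hB₁d : ∀ X : Set V, X ≠ ∅ → X ≠ Set.univ →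
      (Set.range c ⊆ X ∨ Disjoint (Set.range c) X) →
      (∀ e : ES ⊕ ET, Sum.elim hS hT e ∈ X → Sum.elim tS tT e ∈ X) →
      ∃ e ∈ B₁, tS e ∈ X ∧ hS e ∉ X) :
    -- conclusion, with A₂ the forward edges of C and B₂ the backward ones:
    (A₁ ∪ {e : ES | ∃ i, e = ce i ∧ tS e = c i ∧ hS e = c (i + 1)}) ∩
      (B₁ ∪ (Set.range ce \ {e : ES | ∃ i, e = ce i ∧ tS e = c i ∧ hS e = c (i + 1)})) = ∅ ∧
    (A₁ ∪ {e : ES | ∃ i, e = ce i ∧ tS e = c i ∧ hS e = c (i + 1)}) ∪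
      (B₁ ∪ (Set.range ce \ {e : ES | ∃ i, e = ce i ∧ tS e = c i ∧ hS e = c (i + 1)})) = Set.univ ∧
    IsDijoin (Sum.elim tS tT) (Sum.elim hS hT)
      (Sum.inl '' (A₁ ∪ {e : ES | ∃ i, e = ce i ∧ tS e = c i ∧ hS e = c (i + 1)})) ∧
    IsDijoin (Sum.elim tS tT) (Sum.elim hS hT)
      (Sum.inl '' (B₁ ∪ (Set.range ce \ {e : ES | ∃ i, e = ce i ∧ tS e = c i ∧ hS e = c (i + 1)}))) :=
  stmt2_general tS hS tT hT n hn c ce hceinj hends A₁ B₁ hU hI hA₁d hB₁d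
end

section
/- Let S be a tree and let v be a vertex of S of degree two with neighbours u, w. Let T be the tree obtained from S by deleting v and adding a new edge uw. If T is upright, then S is upright. -/
/-!
Members of a bias `F` of `S` that separate `v` from both `u` and `w` are dropped, and the others
are restricted to `V \ {v}`. For two kept members `A`, `B`, an edge at `v` joining `A \ B` to
`B \ A` forces `uw` to do the same in `T`, so `|D_S(A, B)| ≤ |D_T(A, B)|`, strictly when `A ∩ B`
or `A ∪ B` is dropped; this carries the bias axioms and the cut condition over to `T`. A directing
of `T` lifts to `S` by orienting the path `u v w` like the edge `uw`: kept members are entered and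
left where they are in `T`, dropped ones through the two edges at `v`.
-/

/-- The edges of `S` with exactly one end in `X`. -/
def cutEdges {V : Type} (S : SimpleGraph V) (X : Set V) : Set (Sym2 V) :=
  {e | e ∈ S.edgeSet ∧ ∃ a b, e = s(a, b) ∧ a ∈ X ∧ b ∉ X}

/-- The edges of `S` joining `A \ B` to `B \ A`. -/
def crossEdges {V : Type} (S : SimpleGraph V) (A B : Set V) : Set (Sym2 V) :=
  {e | e ∈ S.edgeSet ∧ ∃ a b, e = s(a, b) ∧ a ∈ A \ B ∧ b ∈ B \ A}

/-- A bias in the graph `S`. -/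
def IsBias {V : Type} (S : SimpleGraph V) (F : Set (Set V)) : Prop :=
  (∀ A ∈ F, A ≠ ∅ ∧ A ≠ Set.univ) ∧
  (∀ A ∈ F, ∀ B ∈ F, crossEdges S A B = ∅ →
      (A ∩ B ∈ F ∨ A ∩ B = ∅ ∨ A ∩ B = Set.univ) ∧
      (A ∪ B ∈ F ∨ A ∪ B = ∅ ∨ A ∪ B = Set.univ)) ∧
  (∀ A ∈ F, ∀ B ∈ F, (crossEdges S A B).ncard = 1 →
      (A ∩ B ∈ F ∨ A ∩ B = ∅ ∨ A ∩ B = Set.univ) ∨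
      (A ∪ B ∈ F ∨ A ∪ B = ∅ ∨ A ∪ B = Set.univ))

/-- `D` is a directing of `S`: for each edge of `S` exactly one direction is
chosen, and `D` holds only on edges of `S`. -/
def IsDirecting {V : Type} (S : SimpleGraph V) (D : V → V → Prop) : Prop :=
  (∀ a b, D a b → S.Adj a b) ∧ (∀ a b, S.Adj a b → (D a b ↔ ¬ D b a))

/-- Some directed edge leaves `X` (i.e. `D⁺(X) ≠ ∅`). -/
def dirOut {V : Type} (D : V → V → Prop) (X : Set V) : Prop :=
  ∃ a ∈ X, ∃ b, b ∉ X ∧ D a b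

/-- Some directed edge enters `X` (i.e. `D⁻(X) ≠ ∅`). -/
def dirIn {V : Type} (D : V → V → Prop) (X : Set V) : Prop :=
  ∃ a, a ∉ X ∧ ∃ b ∈ X, D a b

/-- A graph `S` is upright if for every bias `F` in `S` with `|D_S(X)| ≥ 2` for
all `X ∈ F`, some directing of `S` has an edge leaving and an edge entering
every member of `F`. -/
def Upright {V : Type} [Fintype V] (S : SimpleGraph V) : Prop :=
  ∀ F : Set (Set V), IsBias S F → (∀ X ∈ F, 2 ≤ (cutEdges S X).ncard) →
    ∃ D : V → V → Prop, IsDirecting S D ∧ ∀ X ∈ F, dirOut D X ∧ dirIn D X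

open SimpleGraph Set

variable {V : Type}

def Crosses (A B : Set V) (a b : V) : Prop :=
  (a ∈ A \ B ∧ b ∈ B \ A) ∨ (b ∈ A \ B ∧ a ∈ B \ A)

lemma mem_crossEdges_iff (G : SimpleGraph V) (A B : Set V) (a b : V) :
    s(a, b) ∈ crossEdges G A B ↔ G.Adj a b ∧ Crosses A B a b := by
  refine ⟨fun ⟨hab, x, y, hxy, hx, hy⟩ => ⟨hab, ?_⟩, fun ⟨hab, hc⟩ => ⟨hab, ?_⟩⟩
  · rcases Sym2.eq_iff.mp hxy with ⟨rfl, rfl⟩ | ⟨rfl, rfl⟩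
    exacts [.inl ⟨hx, hy⟩, .inr ⟨hx, hy⟩]
  · rcases hc with ⟨hx, hy⟩ | ⟨hx, hy⟩
    exacts [⟨a, b, rfl, hx, hy⟩, ⟨b, a, Sym2.eq_swap, hx, hy⟩]

lemma crosses_of_sym2_eq {A B : Set V} {a b c d : V} (h : s(a, b) = s(c, d))
    (hab : Crosses A B a b) : Crosses A B c d := by
  rcases Sym2.eq_iff.mp h with ⟨rfl, rfl⟩ | ⟨rfl, rfl⟩
  exacts [hab, hab.symm]

lemma cutEdges_eq_crossEdges_compl (G : SimpleGraph V) (X : Set V) :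
    cutEdges G X = crossEdges G X Xᶜ := by
  ext e
  simp [cutEdges, crossEdges]

lemma dirIn_iff_dirOut_compl (D : V → V → Prop) (X : Set V) : dirIn D X ↔ dirOut D Xᶜ := by
  simp [dirIn, dirOut]

lemma preimage_mem_image_preimage_or {α β : Type} (f : α → β) {F : Set (Set β)}
    {p : Set β → Prop} {C : Set β} (hC : C ∈ F ∨ C = ∅ ∨ C = univ) (hpC : p C) :
    f ⁻¹' C ∈ (f ⁻¹' ·) '' {X ∈ F | p X} ∨ f ⁻¹' C = ∅ ∨ f ⁻¹' C = univ := by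
  rcases hC with hC | rfl | rfl
  exacts [.inl ⟨C, ⟨hC, hpC⟩, rfl⟩, .inr (.inl preimage_empty), .inr (.inr preimage_univ)]

def Isolates (X : Set V) (v u w : V) : Prop :=
  (v ∈ X ∧ u ∉ X ∧ w ∉ X) ∨ (v ∉ X ∧ u ∈ X ∧ w ∈ X)

section Isolates

variable {A B X : Set V} {v u w : V}

lemma isolates_compl : Isolates Xᶜ v u w ↔ Isolates X v u w := by
  simp only [Isolates, mem_compl_iff]
  grind

lemma crosses_of_crosses_middle (hA : ¬Isolates A v u w) (hB : ¬Isolates B v u w)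
    (h : Crosses A B v u ∨ Crosses A B v w) : Crosses A B u w := by
  simp only [Isolates, Crosses, mem_sdiff] at hA hB h ⊢
  grind

lemma not_crosses_middle_and (hA : ¬Isolates A v u w) :
    ¬(Crosses A B v u ∧ Crosses A B v w) := by
  simp only [Isolates, Crosses, mem_sdiff] at hA ⊢
  grind

lemma not_isolates_inter_or_union (hB : ¬Isolates B v u w) :
    ¬Isolates (A ∩ B) v u w ∨ ¬Isolates (A ∪ B) v u w := by
  simp only [Isolates, mem_inter_iff, mem_union] at hB ⊢
  grind

lemma crosses_of_isolates_inter_or_union (hA : ¬Isolates A v u w) (hB : ¬Isolates B v u w)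
    (h : Isolates (A ∩ B) v u w ∨ Isolates (A ∪ B) v u w) :
    Crosses A B u w ∧ ¬Crosses A B v u ∧ ¬Crosses A B v w := by
  simp only [Isolates, Crosses, mem_sdiff, mem_inter_iff, mem_union] at hA hB h ⊢
  grind

lemma dirOut_of_isolates {D : V → V → Prop} (hX : Isolates X v u w)
    (h : (D u v ∧ D v w) ∨ (D w v ∧ D v u)) : dirOut D X := by
  rcases hX with ⟨hv, hu, hw⟩ | ⟨hv, hu, hw⟩ <;> rcases h with ⟨h₁, h₂⟩ | ⟨h₁, h₂⟩
  exacts [⟨v, hv, w, hw, h₂⟩, ⟨v, hv, u, hu, h₂⟩, ⟨u, hu, v, hv, h₁⟩, ⟨w, hw, v, hv, h₁⟩]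

lemma eq_empty_of_preimage_eq_empty (hu : u ≠ v) (hw : w ≠ v)
    (hX : ¬Isolates X v u w) (h : (Subtype.val : {x : V | x ≠ v} → V) ⁻¹' X = ∅) : X = ∅ := by
  have hx : ∀ x, x ≠ v → x ∉ X := fun x hx => eq_empty_iff_forall_notMem.1 h ⟨x, hx⟩
  have hv : v ∉ X := fun hv => hX (.inl ⟨hv, hx u hu, hx w hw⟩)
  exact eq_empty_of_forall_notMem fun x hxX => hx x (ne_of_mem_of_not_mem hxX hv) hxX

lemma eq_univ_of_preimage_eq_univ (hu : u ≠ v) (hw : w ≠ v)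
    (hX : ¬Isolates X v u w) (h : (Subtype.val : {x : V | x ≠ v} → V) ⁻¹' X = univ) :
    X = univ := by
  rw [← compl_empty_iff, eq_empty_of_preimage_eq_empty hu hw (mt isolates_compl.1 hX)]
  rw [preimage_compl, h, compl_univ]

end Isolates

def SimpleGraph.suppress (S : SimpleGraph V) {v u w : V} (hu : S.Adj v u) (hw : S.Adj v w) :
    SimpleGraph {x : V | x ≠ v} :=
  S.induce {x | x ≠ v} ⊔ fromEdgeSet {s(⟨u, hu.ne'⟩, ⟨w, hw.ne'⟩)}

section Suppress

variable {S : SimpleGraph V} {v u w : V} (hu : S.Adj v u) (hw : S.Adj v w)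

lemma suppress_adj (huw : u ≠ w) {a b : {x : V | x ≠ v}} :
    (S.suppress hu hw).Adj a b ↔ S.Adj a b ∨ s((a : V), b) = s(u, w) := by
  have hval : s(a, b) = s(⟨u, hu.ne'⟩, ⟨w, hw.ne'⟩) ↔ s((a : V), b) = s(u, w) :=
    (Sym2.map.injective Subtype.val_injective).eq_iff.symm
  simp only [SimpleGraph.suppress, sup_adj, comap_adj, fromEdgeSet_adj, mem_singleton_iff, hval]
  refine or_congr_right ⟨And.left, fun h => ⟨h, fun hab => huw ?_⟩⟩
  rw [hab, Sym2.eq_iff] at h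
  grind

lemma image_crossEdges_suppress (huw : u ≠ w) (A B : Set V) :
    Sym2.map Subtype.val '' crossEdges (S.suppress hu hw) (Subtype.val ⁻¹' A) (Subtype.val ⁻¹' B) =
      crossEdges S A B \ {e | v ∈ e} ∪ {e | e = s(u, w) ∧ Crosses A B u w} := by
  ext e
  constructor
  · rintro ⟨e', he', rfl⟩
    induction e' using Sym2.ind with | h a b => ?_
    rw [mem_crossEdges_iff, suppress_adj hu hw huw] at he'
    obtain ⟨hab | hab, hcr⟩ := he'
    · refine .inl ⟨(mem_crossEdges_iff S A B a b).2 ⟨hab, hcr⟩, fun hv => ?_⟩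
      rcases Sym2.mem_iff.mp hv with h | h
      exacts [a.2 h.symm, b.2 h.symm]
    · exact .inr ⟨hab, crosses_of_sym2_eq hab hcr⟩
  · rintro (⟨hab, hv⟩ | ⟨rfl, hcr⟩)
    · induction e using Sym2.ind with | h a b => ?_
      rw [mem_crossEdges_iff] at hab
      have ha : a ≠ v := fun h => hv (h ▸ Sym2.mem_mk_left a b)
      have hb : b ≠ v := fun h => hv (h ▸ Sym2.mem_mk_right a b)
      exact ⟨s(⟨a, ha⟩, ⟨b, hb⟩),
        (mem_crossEdges_iff _ _ _ _ _).2 ⟨(suppress_adj hu hw huw).2 (.inl hab.1), hab.2⟩, rfl⟩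
    · exact ⟨s(⟨u, hu.ne'⟩, ⟨w, hw.ne'⟩),
        (mem_crossEdges_iff _ _ _ _ _).2 ⟨(suppress_adj hu hw huw).2 (.inr rfl), hcr⟩, rfl⟩

lemma ncard_crossEdges_add_suppress [Finite V] (huw : u ≠ w) (hnadj : ¬S.Adj u w)
    (A B : Set V) :
    (crossEdges S A B).ncard + {e | e = s(u, w) ∧ Crosses A B u w}.ncard =
      (crossEdges (S.suppress hu hw) (Subtype.val ⁻¹' A) (Subtype.val ⁻¹' B)).ncard +
        (crossEdges S A B ∩ {e | v ∈ e}).ncard := by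
  have hdisj : Disjoint (crossEdges S A B \ {e | v ∈ e}) {e | e = s(u, w) ∧ Crosses A B u w} :=
    Set.disjoint_left.2 fun e he ⟨heq, _⟩ => hnadj (heq ▸ he.1).1
  rw [← ncard_image_of_injective _ (Sym2.map.injective Subtype.val_injective),
    image_crossEdges_suppress hu hw huw, ncard_union_eq hdisj,
    ← ncard_inter_add_ncard_sdiff_eq_ncard (crossEdges S A B) {e | v ∈ e}]
  omega

lemma crossEdges_inter_subset (hdeg : ∀ x, S.Adj v x → x = u ∨ x = w) (A B : Set V) :
    crossEdges S A B ∩ {e | v ∈ e} ⊆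
      {e | (e = s(v, u) ∧ Crosses A B v u) ∨ (e = s(v, w) ∧ Crosses A B v w)} := by
  rintro e ⟨he, hv⟩
  obtain ⟨x, rfl⟩ := Sym2.mem_iff_exists.mp hv
  obtain ⟨hvx, hcr⟩ := (mem_crossEdges_iff S A B v x).mp he
  rcases hdeg x hvx with rfl | rfl
  exacts [.inl ⟨rfl, hcr⟩, .inr ⟨rfl, hcr⟩]

lemma ncard_crossEdges_le_suppress [Finite V] (huw : u ≠ w) (hnadj : ¬S.Adj u w)
    (hdeg : ∀ x, S.Adj v x → x = u ∨ x = w) {A B : Set V}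
    (hA : ¬Isolates A v u w) (hB : ¬Isolates B v u w) :
    (crossEdges S A B).ncard ≤
      (crossEdges (S.suppress hu hw) (Subtype.val ⁻¹' A) (Subtype.val ⁻¹' B)).ncard := by
  have hcount := ncard_crossEdges_add_suppress hu hw huw hnadj A B
  have hsub := crossEdges_inter_subset hdeg A B
  suffices (crossEdges S A B ∩ {e | v ∈ e}).ncard ≤
      {e | e = s(u, w) ∧ Crosses A B u w}.ncard by omega
  by_cases hcr : Crosses A B u w
  · simp only [hcr, and_true, ofPred_eq_eq_singleton, ncard_singleton]
    refine (ncard_le_one (toFinite _)).2 fun e he e' he' => ?_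
    have := not_crosses_middle_and (B := B) hA
    rcases hsub he with ⟨rfl, _⟩ | ⟨rfl, _⟩ <;> rcases hsub he' with ⟨rfl, _⟩ | ⟨rfl, _⟩ <;> tauto
  · suffices crossEdges S A B ∩ {e | v ∈ e} = ∅ by simp [this]
    refine eq_empty_of_forall_notMem fun e he => hcr ?_
    exact crosses_of_crosses_middle hA hB ((hsub he).imp And.right And.right)

lemma ncard_crossEdges_lt_suppress [Finite V] (huw : u ≠ w) (hnadj : ¬S.Adj u w)
    (hdeg : ∀ x, S.Adj v x → x = u ∨ x = w) {A B : Set V}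
    (hA : ¬Isolates A v u w) (hB : ¬Isolates B v u w)
    (hAB : Isolates (A ∩ B) v u w ∨ Isolates (A ∪ B) v u w) :
    (crossEdges S A B).ncard <
      (crossEdges (S.suppress hu hw) (Subtype.val ⁻¹' A) (Subtype.val ⁻¹' B)).ncard := by
  have hcount := ncard_crossEdges_add_suppress hu hw huw hnadj A B
  obtain ⟨hcr, hu', hw'⟩ := crosses_of_isolates_inter_or_union hA hB hAB
  have hv : crossEdges S A B ∩ {e | v ∈ e} = ∅ :=
    eq_empty_of_subset_empty <| (crossEdges_inter_subset hdeg A B).trans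
      fun _ he => he.elim (hu' ·.2) (hw' ·.2)
  simp only [hcr, and_true, ofPred_eq_eq_singleton, ncard_singleton, hv, ncard_empty] at hcount
  omega

lemma ncard_cutEdges_le_suppress [Finite V] (huw : u ≠ w) (hnadj : ¬S.Adj u w)
    (hdeg : ∀ x, S.Adj v x → x = u ∨ x = w) {X : Set V} (hX : ¬Isolates X v u w) :
    (cutEdges S X).ncard ≤ (cutEdges (S.suppress hu hw) (Subtype.val ⁻¹' X)).ncard := by
  rw [cutEdges_eq_crossEdges_compl, cutEdges_eq_crossEdges_compl]
  exact ncard_crossEdges_le_suppress hu hw huw hnadj hdeg hX (mt isolates_compl.1 hX)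

lemma isBias_suppress [Finite V] (huw : u ≠ w) (hnadj : ¬S.Adj u w)
    (hdeg : ∀ x, S.Adj v x → x = u ∨ x = w) {F : Set (Set V)} (hF : IsBias S F) :
    IsBias (S.suppress hu hw) ((Subtype.val ⁻¹' ·) '' {X ∈ F | ¬Isolates X v u w}) := by
  obtain ⟨hproper, hnoCross, honeCross⟩ := hF
  refine ⟨?_, ?_, ?_⟩
  · rintro _ ⟨A, ⟨hA, hAi⟩, rfl⟩
    exact ⟨mt (eq_empty_of_preimage_eq_empty hu.ne' hw.ne' hAi) (hproper A hA).1,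
      mt (eq_univ_of_preimage_eq_univ hu.ne' hw.ne' hAi) (hproper A hA).2⟩
  · rintro _ ⟨A, ⟨hA, hAi⟩, rfl⟩ _ ⟨B, ⟨hB, hBi⟩, rfl⟩ hAB
    beta_reduce at hAB
    have hgood : ¬Isolates (A ∩ B) v u w ∧ ¬Isolates (A ∪ B) v u w := by
      rw [← not_or]
      intro hbad
      have := ncard_crossEdges_lt_suppress hu hw huw hnadj hdeg hAi hBi hbad
      rw [hAB, ncard_empty] at this
      exact Nat.not_lt_zero _ this
    have hS : crossEdges S A B = ∅ := by
      have := ncard_crossEdges_le_suppress hu hw huw hnadj hdeg hAi hBi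
      rw [hAB, ncard_empty, Nat.le_zero] at this
      exact (ncard_eq_zero (toFinite _)).1 this
    obtain ⟨hinter, hunion⟩ := hnoCross A hA B hB hS
    exact ⟨preimage_mem_image_preimage_or _ hinter hgood.1,
      preimage_mem_image_preimage_or _ hunion hgood.2⟩
  · rintro _ ⟨A, ⟨hA, hAi⟩, rfl⟩ _ ⟨B, ⟨hB, hBi⟩, rfl⟩ hAB
    beta_reduce at hAB
    by_cases hbad : Isolates (A ∩ B) v u w ∨ Isolates (A ∪ B) v u w
    · have hS : crossEdges S A B = ∅ := by
        have := ncard_crossEdges_lt_suppress hu hw huw hnadj hdeg hAi hBi hbad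
        rw [hAB, Nat.lt_one_iff] at this
        exact (ncard_eq_zero (toFinite _)).1 this
      obtain ⟨hinter, hunion⟩ := hnoCross A hA B hB hS
      rcases not_isolates_inter_or_union hBi with h | h
      exacts [.inl (preimage_mem_image_preimage_or _ hinter h),
        .inr (preimage_mem_image_preimage_or _ hunion h)]
    obtain ⟨hgoodInter, hgoodUnion⟩ := not_or.1 hbad
    have hle := ncard_crossEdges_le_suppress hu hw huw hnadj hdeg hAi hBi
    rcases Nat.le_one_iff_eq_zero_or_eq_one.1 (hAB ▸ hle) with h0 | h1
    · obtain ⟨hinter, -⟩ := hnoCross A hA B hB ((ncard_eq_zero (toFinite _)).1 h0)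
      exact .inl (preimage_mem_image_preimage_or _ hinter hgoodInter)
    · rcases honeCross A hA B hB h1 with h | h
      exacts [.inl (preimage_mem_image_preimage_or _ h hgoodInter),
        .inr (preimage_mem_image_preimage_or _ h hgoodUnion)]

end Suppress

section Directing

variable {S : SimpleGraph V} {v u w : V} (hu : S.Adj v u) (hw : S.Adj v w)

open Classical in
/-- Seen from its neighbour `b`, the suppressed vertex `v` stands for its other neighbour, so the
edge `ab` of `S` becomes the edge between `proxy hu hw b a` and `proxy hu hw a b`. -/
noncomputable def proxy (b x : V) : {x : V | x ≠ v} :=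
  if hx : x = v then (if b = u then ⟨w, hw.ne'⟩ else ⟨u, hu.ne'⟩) else ⟨x, hx⟩

noncomputable def liftDirecting (D : {x : V | x ≠ v} → {x : V | x ≠ v} → Prop) (a b : V) : Prop :=
  S.Adj a b ∧ D (proxy hu hw b a) (proxy hu hw a b)

lemma proxy_of_ne {x : V} (b : V) (hx : x ≠ v) : proxy hu hw b x = ⟨x, hx⟩ := dif_neg hx

lemma proxy_left : proxy hu hw u v = ⟨w, hw.ne'⟩ := by simp [proxy]

lemma proxy_right (huw : u ≠ w) : proxy hu hw w v = ⟨u, hu.ne'⟩ := by simp [proxy, huw.symm]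

lemma suppress_adj_proxy (huw : u ≠ w) (hdeg : ∀ x, S.Adj v x → x = u ∨ x = w) {a b : V}
    (hab : S.Adj a b) : (S.suppress hu hw).Adj (proxy hu hw b a) (proxy hu hw a b) := by
  have hvb : ∀ b, S.Adj v b → (S.suppress hu hw).Adj (proxy hu hw b v) (proxy hu hw v b) := by
    intro b hb
    rcases hdeg b hb with rfl | rfl
    · rw [proxy_left, proxy_of_ne _ _ _ hu.ne', suppress_adj hu hw huw]
      exact .inr Sym2.eq_swap
    · rw [proxy_right _ _ huw, proxy_of_ne _ _ _ hw.ne', suppress_adj hu hw huw]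
      exact .inr rfl
  by_cases ha : a = v
  · subst ha
    exact hvb b hab
  by_cases hb : b = v
  · subst hb
    exact (hvb a hab.symm).symm
  rw [proxy_of_ne _ _ _ ha, proxy_of_ne _ _ _ hb, suppress_adj hu hw huw]
  exact .inl hab

lemma isDirecting_liftDirecting (huw : u ≠ w) (hdeg : ∀ x, S.Adj v x → x = u ∨ x = w)
    {D : {x : V | x ≠ v} → {x : V | x ≠ v} → Prop} (hD : IsDirecting (S.suppress hu hw) D) :
    IsDirecting S (liftDirecting hu hw D) := by
  refine ⟨fun a b h => h.1, fun a b hab => ?_⟩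
  simp only [liftDirecting, hab, hab.symm, true_and]
  exact hD.2 _ _ (suppress_adj_proxy hu hw huw hdeg hab)

lemma liftDirecting_through (huw : u ≠ w) {D : {x : V | x ≠ v} → {x : V | x ≠ v} → Prop}
    {a b : {x : V | x ≠ v}} (hab : D a b) (h : s((a : V), b) = s(u, w)) :
    liftDirecting hu hw D a v ∧ liftDirecting hu hw D v b := by
  rcases Sym2.eq_iff.mp h with ⟨ha, hb⟩ | ⟨ha, hb⟩
  · obtain rfl : a = ⟨u, hu.ne'⟩ := Subtype.ext ha
    obtain rfl : b = ⟨w, hw.ne'⟩ := Subtype.ext hb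
    refine ⟨⟨hu.symm, ?_⟩, ⟨hw, ?_⟩⟩
    · rwa [proxy_of_ne _ _ _ hu.ne', proxy_left]
    · rwa [proxy_of_ne _ _ _ hw.ne', proxy_right _ _ huw]
  · obtain rfl : a = ⟨w, hw.ne'⟩ := Subtype.ext ha
    obtain rfl : b = ⟨u, hu.ne'⟩ := Subtype.ext hb
    refine ⟨⟨hw.symm, ?_⟩, ⟨hu, ?_⟩⟩
    · rwa [proxy_of_ne _ _ _ hw.ne', proxy_right _ _ huw]
    · rwa [proxy_of_ne _ _ _ hu.ne', proxy_left]

lemma liftDirecting_path (huw : u ≠ w) {D : {x : V | x ≠ v} → {x : V | x ≠ v} → Prop}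
    (hD : IsDirecting (S.suppress hu hw) D) :
    (liftDirecting hu hw D u v ∧ liftDirecting hu hw D v w) ∨
      (liftDirecting hu hw D w v ∧ liftDirecting hu hw D v u) := by
  have hadj : (S.suppress hu hw).Adj ⟨u, hu.ne'⟩ ⟨w, hw.ne'⟩ :=
    (suppress_adj hu hw huw).2 (.inr rfl)
  by_cases h : D ⟨u, hu.ne'⟩ ⟨w, hw.ne'⟩
  · exact .inl (liftDirecting_through hu hw huw h rfl)
  · exact .inr (liftDirecting_through hu hw huw ((hD.2 _ _ hadj.symm).2 h) Sym2.eq_swap)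

lemma dirOut_liftDirecting (huw : u ≠ w) {D : {x : V | x ≠ v} → {x : V | x ≠ v} → Prop}
    (hD : IsDirecting (S.suppress hu hw) D) {X : Set V} (h : dirOut D (Subtype.val ⁻¹' X)) :
    dirOut (liftDirecting hu hw D) X := by
  obtain ⟨a, ha, b, hb, hab⟩ := h
  rcases (suppress_adj hu hw huw).1 (hD.1 a b hab) with hS | huw'
  · refine ⟨a, ha, b, hb, hS, ?_⟩
    rwa [proxy_of_ne _ _ _ a.2, proxy_of_ne _ _ _ b.2]
  · obtain ⟨hav, hvb⟩ := liftDirecting_through hu hw huw hab huw'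
    by_cases hv : v ∈ X
    exacts [⟨v, hv, b, hb, hvb⟩, ⟨a, ha, v, hv, hav⟩]

end Directing

theorem upright_of_upright_suppress [Fintype V] [DecidableEq V] {S : SimpleGraph V} {v u w : V}
    (hu : S.Adj v u) (hw : S.Adj v w) (huw : u ≠ w) (hnadj : ¬S.Adj u w)
    (hdeg : ∀ x, S.Adj v x → x = u ∨ x = w) (hT : Upright (S.suppress hu hw)) : Upright S := by
  intro F hF hcut
  obtain ⟨D, hD, hDF⟩ := hT _ (isBias_suppress hu hw huw hnadj hdeg hF) <| by
    rintro _ ⟨X, ⟨hX, hXi⟩, rfl⟩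
    exact (hcut X hX).trans (ncard_cutEdges_le_suppress hu hw huw hnadj hdeg hXi)
  refine ⟨liftDirecting hu hw D, isDirecting_liftDirecting hu hw huw hdeg hD, fun X hX => ?_⟩
  rw [dirIn_iff_dirOut_compl]
  by_cases hXi : Isolates X v u w
  · have hpath := liftDirecting_path hu hw huw hD
    exact ⟨dirOut_of_isolates hXi hpath, dirOut_of_isolates (isolates_compl.2 hXi) hpath⟩
  · obtain ⟨hout, hin⟩ := hDF _ ⟨X, ⟨hX, hXi⟩, rfl⟩
    rw [dirIn_iff_dirOut_compl] at hin
    exact ⟨dirOut_liftDirecting hu hw huw hD hout, dirOut_liftDirecting hu hw huw hD hin⟩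

/-- let `v` be a degree-two vertex of a tree `S` with neighbours
`u, w`, and let `T` be obtained from `S` by deleting `v` and adding the edge
`uw`. If `T` is upright then so is `S`. -/
theorem stmt7 {V : Type} [Fintype V] [DecidableEq V]
    (S : SimpleGraph V) (hS : S.IsTree) (v u w : V)
    (hu : S.Adj v u) (hw : S.Adj v w) (huw : u ≠ w)
    (hdeg2 : ∀ x, S.Adj v x → x = u ∨ x = w)
    (hT : Upright ((S.induce {x : V | x ≠ v}) ⊔
        SimpleGraph.fromEdgeSet
          {s((⟨u, hu.ne'⟩ : {x : V | x ≠ v}), ⟨w, hw.ne'⟩)})) :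
    Upright S := by
  have hnadj : ¬S.Adj u w := fun huw' =>
    hS.isAcyclic.cliqueFree le_rfl {u, v, w} (is3Clique_triple_iff.2 ⟨hu.symm, huw', hw⟩)
  exact upright_of_upright_suppress hu hw huw hnadj hdeg2 hT
end

section
/- Let S′ be a digraph and T a directed tree with V(T) = V(S′) and E(T) ∩ E(S′) = ∅, and let C be a directed cycle of S′ ∪ T with E(C) ∩ E(S′) minimal among all directed cycles of S′ ∪ T (C is optimal). Then for every directed path P of T, the intersection of C with P is either a directed path or empty. -/
/-!
If a `T`-path `q` leaves the optimal cycle `C` at `C.f a` and first meets it again at `C.f b`,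
replacing the arc of `C` from `a` to `b` by `q` gives a directed cycle whose `S'`-edges are among
those of `C`. By optimality it keeps all of them, so the bypassed arc consists of `T`-edges. In the
tree `T` the arc and `q` are then the same path: `q` just follows `C`. Applied to consecutive
`C`-vertices of a `T`-path, this shows that the path meets `C` without gaps and that consecutive
common vertices are joined by edges of `C`.
-/

/-- A directed cycle in the digraph given by the relation `A`: `n ≥ 1` distinct
vertices `f 0, f 1, …, f (n-1)` with an edge from each to the next (cyclically). -/
structure DirCycle {V : Type} (A : V → V → Prop) where
  n : ℕ
  pos : 0 < n
  f : ZMod n → V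
  inj : Function.Injective f
  step : ∀ i, A (f i) (f (i + 1))

/-- The (directed) edge set of a directed cycle. -/
def DirCycle.edges {V : Type} {A : V → V → Prop} (C : DirCycle A) : Set (V × V) :=
  {p | ∃ i, p.1 = C.f i ∧ p.2 = C.f (i + 1)}

theorem Nat.exists_gap {P : ℕ → Prop} {i j k : ℕ} (hij : i ≤ j) (hjk : j ≤ k) (hi : P i)
    (hk : P k) (hj : ¬ P j) :
    ∃ i' k', i' < j ∧ j < k' ∧ k' ≤ k ∧ P i' ∧ P k' ∧ ∀ s, i' < s → s < k' → ¬ P s := by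
  classical
  have hex : ∃ s, j ≤ s ∧ P s := ⟨k, hjk, hk⟩
  have hi' : P (Nat.findGreatest P j) := Nat.findGreatest_spec hij hi
  have hk' := Nat.find_spec hex
  refine ⟨Nat.findGreatest P j, Nat.find hex, ?_, ?_, Nat.find_min' hex ⟨hjk, hk⟩, hi', hk'.2,
    fun s hs hs' hPs => ?_⟩
  · exact (Nat.findGreatest_le j).lt_of_ne fun h => hj (h ▸ hi')
  · exact hk'.1.lt_of_ne fun h => hj (h ▸ hk'.2)
  · rcases le_total s j with hsj | hjs
    · exact absurd (Nat.le_findGreatest hsj hPs) (Nat.not_le.mpr hs)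
    · exact absurd (Nat.find_min' hex ⟨hjs, hPs⟩) (Nat.not_le.mpr hs')

theorem SimpleGraph.IsAcyclic.eq_of_isChain {V : Type*} {G : SimpleGraph V} (hG : G.IsAcyclic)
    {l₁ l₂ : List V} (h₁ : l₁ ≠ []) (h₂ : l₂ ≠ []) (hc₁ : l₁.IsChain G.Adj)
    (hc₂ : l₂.IsChain G.Adj) (hn₁ : l₁.Nodup) (hn₂ : l₂.Nodup)
    (hhead : l₁.head h₁ = l₂.head h₂) (hlast : l₁.getLast h₁ = l₂.getLast h₂) : l₁ = l₂ := by
  have h := (hG.subsingleton_path _ _).elim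
    ⟨(Walk.ofSupport l₁ h₁ hc₁).copy hhead hlast, by
      rw [Walk.isPath_copy, Walk.isPath_def, Walk.support_ofSupport]; exact hn₁⟩
    ⟨Walk.ofSupport l₂ h₂ hc₂, by rw [Walk.isPath_def, Walk.support_ofSupport]; exact hn₂⟩
  simpa using congrArg (fun p => p.1.support) h

/-- The directed path `q 0 → q 1 → ⋯ → q L` of `R`; the values of `q` beyond `L` play no role. -/
def IsDirPath {V : Type*} (R : V → V → Prop) (q : ℕ → V) (L : ℕ) : Prop :=
  Set.InjOn q (Set.Iic L) ∧ ∀ s < L, R (q s) (q (s + 1))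

namespace IsDirPath

variable {V : Type*} {R : V → V → Prop} {q : ℕ → V} {L : ℕ}

lemma mono {R' : V → V → Prop} (h : ∀ a b, R a b → R' a b) (hq : IsDirPath R q L) :
    IsDirPath R' q L :=
  ⟨hq.1, fun s hs => h _ _ (hq.2 s hs)⟩

lemma shift (hq : IsDirPath R q L) {i L' : ℕ} (h : i + L' ≤ L) :
    IsDirPath R (fun s => q (i + s)) L' := by
  refine ⟨fun s hs t ht hst => ?_, fun s hs => ?_⟩
  · simp only [Set.mem_Iic] at hs ht
    have := hq.1 (Set.mem_Iic.2 (by omega)) (Set.mem_Iic.2 (by omega)) hst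
    omega
  · simpa only [add_assoc] using hq.2 (i + s) (by omega)

lemma of_fin {m : ℕ} {p : Fin (m + 1) → V} (hinj : Function.Injective p)
    (hpath : ∀ i : Fin m, R (p i.castSucc) (p i.succ)) :
    IsDirPath R (fun s => p (Fin.ofNat (m + 1) s)) m := by
  have hval : ∀ s (hs : s ≤ m), Fin.ofNat (m + 1) s = ⟨s, Nat.lt_succ_of_le hs⟩ := fun s hs =>
    Fin.ext (Nat.mod_eq_of_lt (Nat.lt_succ_of_le hs))
  refine ⟨fun s hs t ht hst => ?_, fun s hs => ?_⟩
  · have h := congrArg Fin.val (hinj hst)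
    rwa [hval s hs, hval t ht] at h
  · show R (p (Fin.ofNat (m + 1) s)) (p (Fin.ofNat (m + 1) (s + 1)))
    rw [hval s hs.le, hval (s + 1) hs]
    exact hpath ⟨s, hs⟩

lemma isChain_fromRel (hq : IsDirPath R q L) :
    ((List.range (L + 1)).map q).IsChain (SimpleGraph.fromRel R).Adj := by
  rw [List.isChain_map, List.isChain_range_succ]
  intro s hs
  refine (SimpleGraph.fromRel_adj _ _ _).mpr ⟨fun h => ?_, Or.inl (hq.2 s hs)⟩
  have := hq.1 (Set.mem_Iic.2 hs.le) (Set.mem_Iic.2 hs) h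
  omega

lemma nodup (hq : IsDirPath R q L) : ((List.range (L + 1)).map q).Nodup :=
  List.Nodup.map_on (fun _ hx _ hy => hq.1 (Nat.lt_succ_iff.1 (List.mem_range.1 hx))
    (Nat.lt_succ_iff.1 (List.mem_range.1 hy))) List.nodup_range

theorem eq_of_isAcyclic (hR : (SimpleGraph.fromRel R).IsAcyclic) {g : ℕ → V} {K : ℕ}
    (hg : IsDirPath R g K) (hq : IsDirPath R q L) (h0 : g 0 = q 0) (hlast : g K = q L) :
    K = L ∧ ∀ s ≤ L, g s = q s := by
  have h := hR.eq_of_isChain (by simp) (by simp) hg.isChain_fromRel hq.isChain_fromRel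
    hg.nodup hq.nodup (by simpa using h0) (by simpa [List.getLast_map] using hlast)
  have hKL : K = L := by simpa using congrArg List.length h
  subst hKL
  refine ⟨rfl, fun s hs => ?_⟩
  simpa [List.getElem?_range (Nat.lt_succ_of_le hs)] using congrArg (fun l => l[s]?) h

end IsDirPath

namespace DirCycle

variable {V : Type} {A : V → V → Prop}

theorem exists_edges_eq_of_closedWalk (F : ℕ → V) {n : ℕ} (hn : 0 < n)
    (hinj : Set.InjOn F (Set.Iio n)) (hclosed : F n = F 0)
    (hstep : ∀ s < n, A (F s) (F (s + 1))) :
    ∃ C : DirCycle A, C.edges = {e | ∃ s < n, e = (F s, F (s + 1))} := by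
  have : NeZero n := ⟨hn.ne'⟩
  have hsucc : ∀ x : ZMod n, F (x + 1).val = F (x.val + 1) := by
    intro x
    rw [← ZMod.natCast_zmod_val x, ← Nat.cast_succ, ZMod.val_natCast, ZMod.val_natCast,
      Nat.mod_eq_of_lt x.val_lt]
    rcases (Nat.succ_le_of_lt x.val_lt).lt_or_eq with h | h
    · rw [Nat.mod_eq_of_lt h]
    · rw [h, Nat.mod_self, ← hclosed]
      exact congrArg F h.symm
  refine ⟨⟨n, hn, fun x => F x.val, fun x y h => ZMod.val_injective n
    (hinj (Set.mem_Iio.mpr x.val_lt) (Set.mem_Iio.mpr y.val_lt) h), fun x => ?_⟩, ?_⟩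
  · simpa only [hsucc] using hstep x.val x.val_lt
  · ext e
    constructor
    · rintro ⟨x, h1, h2⟩
      exact ⟨x.val, x.val_lt, Prod.ext h1 (h2.trans (hsucc x))⟩
    · rintro ⟨s, hs, rfl⟩
      refine ⟨s, by simp [ZMod.val_cast_of_lt hs], ?_⟩
      simpa [ZMod.val_cast_of_lt hs] using (hsucc (s : ZMod n)).symm

section

variable (C : DirCycle A) (a : ZMod C.n)

lemma eq_of_apply_add_natCast_eq {i j : ℕ} (hi : i < C.n) (hj : j < C.n)
    (h : C.f (a + i) = C.f (a + j)) : i = j := by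
  simpa [ZMod.val_cast_of_lt hi, ZMod.val_cast_of_lt hj] using
    congrArg ZMod.val (add_left_cancel (C.inj h))

lemma apply_add_natCast_succ (s : ℕ) : C.f (a + (s + 1 : ℕ)) = C.f (a + s + 1) := by
  rw [Nat.cast_succ, add_assoc]

/-- Follow `q` for `L` steps, then go around `C` from `C.f (a + k)`; this closes up after
`C.n - k` more steps, when `C` is back at `C.f a = q 0`. -/
def detour (k L : ℕ) (q : ℕ → V) (s : ℕ) : V :=
  if s < L then q s else C.f (a + (k + (s - L) : ℕ))

variable {k L : ℕ} {q : ℕ → V}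

lemma detour_of_le (hqL : q L = C.f (a + k)) {s : ℕ} (hs : s ≤ L) :
    C.detour a k L q s = q s := by
  rcases hs.lt_or_eq with hs | rfl
  · simp [detour, hs]
  · simp [detour, hqL]

lemma detour_of_ge {s : ℕ} (hs : L ≤ s) :
    C.detour a k L q s = C.f (a + (k + (s - L) : ℕ)) := by
  simp [detour, Nat.not_lt.mpr hs]

lemma detour_step (hq : IsDirPath A q L) (hqL : q L = C.f (a + k)) (s : ℕ) :
    A (C.detour a k L q s) (C.detour a k L q (s + 1)) := by
  rcases Nat.lt_or_ge s L with hs | hs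
  · rw [C.detour_of_le a hqL hs.le, C.detour_of_le a hqL hs]
    exact hq.2 s hs
  · rw [C.detour_of_ge a hs, C.detour_of_ge a (by omega),
      show k + (s + 1 - L) = k + (s - L) + 1 by omega, apply_add_natCast_succ]
    exact C.step _

lemma detour_closed (hL : 0 < L) (hk : k ≤ C.n) (hq0 : q 0 = C.f a) :
    C.detour a k L q (L + (C.n - k)) = C.detour a k L q 0 := by
  rw [C.detour_of_ge a (by omega), show k + (L + (C.n - k) - L) = C.n by omega]
  simp [detour, hL, hq0]

lemma detour_injOn (hq : IsDirPath A q L) (hq0 : q 0 = C.f a) (hqL : q L = C.f (a + k))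
    (hoff : ∀ s, 0 < s → s < L → q s ∉ Set.range C.f) (hk : 0 < k) :
    Set.InjOn (C.detour a k L q) (Set.Iio (L + (C.n - k))) := by
  have hleave : ∀ s t, s < L → L ≤ t → t < L + (C.n - k) →
      C.detour a k L q s ≠ C.detour a k L q t := by
    intro s t hs ht htn h
    rw [C.detour_of_le a hqL hs.le, C.detour_of_ge a ht] at h
    rcases s.eq_zero_or_pos with rfl | hs0
    · have h0 : C.f (a + (0 : ℕ)) = C.f (a + (k + (t - L) : ℕ)) := by simpa [hq0] using h
      have := C.eq_of_apply_add_natCast_eq a (by omega) (by omega) h0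
      omega
    · exact hoff s hs0 hs ⟨_, h.symm⟩
  intro s hs t ht h
  simp only [Set.mem_Iio] at hs ht
  rcases Nat.lt_or_ge s L with hsL | hsL <;> rcases Nat.lt_or_ge t L with htL | htL
  · rw [C.detour_of_le a hqL hsL.le, C.detour_of_le a hqL htL.le] at h
    exact hq.1 (Set.mem_Iic.mpr hsL.le) (Set.mem_Iic.mpr htL.le) h
  · exact absurd h (hleave s t hsL htL ht)
  · exact absurd h.symm (hleave t s htL hsL hs)
  · rw [C.detour_of_ge a hsL, C.detour_of_ge a htL] at h
    have := C.eq_of_apply_add_natCast_eq a (by omega) (by omega) h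
    omega

theorem exists_reroute (hq : IsDirPath A q L) (hL : 0 < L) (hk : 0 < k) (hkn : k < C.n)
    (hq0 : q 0 = C.f a) (hqL : q L = C.f (a + k))
    (hoff : ∀ s, 0 < s → s < L → q s ∉ Set.range C.f) (hne : q 1 ≠ C.f (a + 1)) :
    ∃ C' : DirCycle A, (∀ e ∈ C'.edges, e ∈ C.edges ∨ ∃ s < L, e = (q s, q (s + 1))) ∧
      ∀ t < k, (C.f (a + t), C.f (a + t + 1)) ∉ C'.edges := by
  obtain ⟨C', hC'⟩ := exists_edges_eq_of_closedWalk (C.detour a k L q) (n := L + (C.n - k))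
    (by omega) (C.detour_injOn a hq hq0 hqL hoff hk) (C.detour_closed a hL hkn.le hq0)
    (fun s _ => C.detour_step a hq hqL s)
  refine ⟨C', ?_, ?_⟩
  · rw [hC']
    rintro e ⟨s, hs, rfl⟩
    rcases Nat.lt_or_ge s L with hsL | hsL
    · exact Or.inr ⟨s, hsL, by rw [C.detour_of_le a hqL hsL.le, C.detour_of_le a hqL hsL]⟩
    · left
      rw [C.detour_of_ge a hsL, C.detour_of_ge a (by omega),
        show k + (s + 1 - L) = k + (s - L) + 1 by omega, apply_add_natCast_succ]
      exact ⟨_, rfl, rfl⟩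
  · intro t ht he
    rw [hC'] at he
    obtain ⟨s, hs, he⟩ := he
    obtain ⟨h1, h2⟩ := Prod.mk.inj he
    rcases Nat.lt_or_ge s L with hsL | hsL
    · rw [C.detour_of_le a hqL hsL.le] at h1
      rcases s.eq_zero_or_pos with rfl | hs0
      · have h0 : C.f (a + t) = C.f (a + (0 : ℕ)) := by simpa [hq0] using h1
        obtain rfl := C.eq_of_apply_add_natCast_eq a (by omega) (by omega) h0
        rw [C.detour_of_le a hqL hL] at h2
        exact hne (by simpa using h2.symm)
      · exact hoff s hs0 hsL ⟨_, h1⟩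
    · rw [C.detour_of_ge a hsL] at h1
      have := C.eq_of_apply_add_natCast_eq a (by omega) (by omega) h1
      omega

end

def IsOptimal (S : V → V → Prop) (C : DirCycle A) : Prop :=
  ∀ C' : DirCycle A, C'.edges ∩ {e | S e.1 e.2} ⊆ C.edges ∩ {e | S e.1 e.2} →
    C.edges ∩ {e | S e.1 e.2} ⊆ C'.edges ∩ {e | S e.1 e.2}

lemma IsOptimal.not_rel_of_not_mem {S : V → V → Prop} {C C' : DirCycle A} (hC : C.IsOptimal S)
    (hC' : ∀ e ∈ C'.edges, S e.1 e.2 → e ∈ C.edges) {e : V × V} (he : e ∈ C.edges)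
    (he' : e ∉ C'.edges) : ¬ S e.1 e.2 :=
  fun hS => he' (hC C' (fun e he => ⟨hC' e he.1 he.2, he.2⟩) ⟨he, hS⟩).1

theorem IsOptimal.apply_one_eq_of_treePath {S' T : V → V → Prop} (hdisj : ∀ a b, T a b → ¬ S' a b)
    (hT : (SimpleGraph.fromRel T).IsAcyclic) {C : DirCycle (fun a b => S' a b ∨ T a b)}
    (hC : C.IsOptimal S') (a : ZMod C.n) {q : ℕ → V} {L : ℕ} (hq : IsDirPath T q L)
    (hL : 0 < L) (hq0 : q 0 = C.f a) (hqL : q L ∈ Set.range C.f)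
    (hoff : ∀ s, 0 < s → s < L → q s ∉ Set.range C.f) : q 1 = C.f (a + 1) := by
  by_contra hne
  have : NeZero C.n := ⟨C.pos.ne'⟩
  obtain ⟨b, hb⟩ := hqL
  set k := (b - a).val
  have hbk : b = a + k := by rw [ZMod.natCast_zmod_val]; ring
  have hk : 0 < k := by
    refine Nat.pos_of_ne_zero fun hk0 => ?_
    have := hq.1 (Set.mem_Iic.mpr le_rfl) (Set.mem_Iic.mpr (Nat.zero_le L))
      (by rw [← hb, hbk, hk0, hq0]; simp)
    omega
  obtain ⟨C', hC'sub, hC'arc⟩ := C.exists_reroute a (hq.mono fun _ _ => Or.inr) hL hk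
    (ZMod.val_lt _) hq0 (hbk ▸ hb.symm) hoff hne
  have hC'S : ∀ e ∈ C'.edges, S' e.1 e.2 → e ∈ C.edges := by
    intro e he hS
    refine (hC'sub e he).resolve_right ?_
    rintro ⟨s, hs, rfl⟩
    exact hdisj _ _ (hq.2 s hs) hS
  have harc : IsDirPath T (fun s => C.f (a + s)) k := by
    refine ⟨fun s hs t ht h => C.eq_of_apply_add_natCast_eq a ?_ ?_ h, fun t ht => ?_⟩
    · exact lt_of_le_of_lt hs (ZMod.val_lt _)
    · exact lt_of_le_of_lt ht (ZMod.val_lt _)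
    · simp only [apply_add_natCast_succ]
      exact (C.step _).resolve_left (hC.not_rel_of_not_mem hC'S ⟨_, rfl, rfl⟩ (hC'arc t ht))
  obtain ⟨-, heq⟩ := harc.eq_of_isAcyclic hT hq (by simp [hq0]) (by rw [← hb, hbk])
  exact hne (by simpa using (heq 1 hL).symm)

end DirCycle

theorem stmt11_general {V : Type} (S' T : V → V → Prop)
    (hdisj : ∀ a b, T a b → ¬ S' a b)
    (htree : (SimpleGraph.fromRel T).IsTree)
    (C : DirCycle (fun a b => S' a b ∨ T a b))
    (hopt : ∀ C' : DirCycle (fun a b => S' a b ∨ T a b),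
      C'.edges ∩ {p : V × V | S' p.1 p.2} ⊆ C.edges ∩ {p : V × V | S' p.1 p.2} →
      C.edges ∩ {p : V × V | S' p.1 p.2} ⊆ C'.edges ∩ {p : V × V | S' p.1 p.2})
    (m : ℕ) (p : Fin (m + 1) → V) (hpinj : Function.Injective p)
    (hpath : ∀ i : Fin m, T (p i.castSucc) (p i.succ)) :
    (∀ i j k : Fin (m + 1), i ≤ j → j ≤ k →
      p i ∈ Set.range C.f → p k ∈ Set.range C.f → p j ∈ Set.range C.f) ∧
    (∀ i : Fin m, p i.castSucc ∈ Set.range C.f → p i.succ ∈ Set.range C.f →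
      (p i.castSucc, p i.succ) ∈ C.edges) := by
  have hC : C.IsOptimal S' := hopt
  have hq := IsDirPath.of_fin hpinj hpath
  set q : ℕ → V := fun s => p (Fin.ofNat (m + 1) s)
  have hpq : ∀ i : Fin (m + 1), p i = q i := fun i => by simp only [q, Fin.ofNat_val_eq_self]
  constructor
  · intro i j k hij hjk hi hk
    by_contra hj
    rw [hpq] at hi hj hk
    obtain ⟨i', k', hi'j, hjk', hk'k, ⟨a, ha⟩, hk', hgap⟩ :=
      Nat.exists_gap (P := fun s => q s ∈ Set.range C.f) hij hjk hi hk hj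
    have hfollow := hC.apply_one_eq_of_treePath hdisj htree.isAcyclic a
      (hq.shift (i := i') (L' := k' - i') (by omega)) (by omega) ha.symm
      (by simpa [Nat.add_sub_cancel' (hi'j.trans hjk').le] using hk')
      (fun s hs hs' => hgap (i' + s) (by omega) (by omega))
    exact hgap (i' + 1) (by omega) (by omega) ⟨_, hfollow.symm⟩
  · rintro i ⟨a, ha⟩ hi
    rw [hpq, Fin.val_castSucc] at ha ⊢
    rw [hpq, Fin.val_succ] at hi ⊢
    have hfollow := hC.apply_one_eq_of_treePath hdisj htree.isAcyclic a
      (hq.shift (i := i) (L' := 1) (by omega)) one_pos ha.symm hi (fun s hs hs' => by omega)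
    exact ⟨a, ha.symm, hfollow⟩

/-- let `S'` be a digraph and `T` an edge-disjoint directed tree on
the same vertex set, and let `C` be a directed cycle of `S' ∪ T` whose set of
`S'`-edges is minimal (an optimal cycle).  Then for every directed path
`p 0, …, p m` of `T`, the intersection of `C` with the path is a directed path
or null: the indices of path vertices lying on `C` form an interval, and any two
consecutive path vertices lying on `C` are joined by an edge of `C`. -/
theorem stmt11 {V : Type} [Fintype V] (S' T : V → V → Prop)
    (hdisj : ∀ a b, T a b → ¬ S' a b)
    (htree : (SimpleGraph.fromRel T).IsTree)
    (hirr : ∀ a, ¬ T a a) (hasym : ∀ a b, T a b → ¬ T b a)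
    (C : DirCycle (fun a b => S' a b ∨ T a b))
    (hopt : ∀ C' : DirCycle (fun a b => S' a b ∨ T a b),
      C'.edges ∩ {p : V × V | S' p.1 p.2} ⊆ C.edges ∩ {p : V × V | S' p.1 p.2} →
      C.edges ∩ {p : V × V | S' p.1 p.2} ⊆ C'.edges ∩ {p : V × V | S' p.1 p.2})
    (m : ℕ) (p : Fin (m + 1) → V) (hpinj : Function.Injective p)
    (hpath : ∀ i : Fin m, T (p i.castSucc) (p i.succ)) :
    (∀ i j k : Fin (m + 1), i ≤ j → j ≤ k →
      p i ∈ Set.range C.f → p k ∈ Set.range C.f → p j ∈ Set.range C.f) ∧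
    (∀ i : Fin m, p i.castSucc ∈ Set.range C.f → p i.succ ∈ Set.range C.f →
      (p i.castSucc, p i.succ) ∈ C.edges) :=
  stmt11_general S' T hdisj htree C hopt m p hpinj hpath
end

section
/- Let T be the digraph with vertices v₁,…,v₇ and directed edges v₁→v₂, v₁→v₃, v₁→v₄, v₅→v₂, v₆→v₃, v₇→v₄, and let S be the graph on the same vertex set with (undirected) edges v₁v₅, v₁v₆, v₁v₇, v₂v₆, v₂v₇, v₃v₅, v₃v₇, v₄v₅, v₄v₆. Then for every edge e of S, the path of the tree T⁻ joining the ends of e is not a directed path of T; yet there is no directing of S, forming a digraph S′, such that both S′ ∪ T and ←S′ ∪ T are acyclic (where ←S′ reverses all edges of S′). -/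
/-- A digraph (given as a relation) is acyclic iff it has no directed cycle,
equivalently no vertex lies on a closed directed walk of positive length. -/
def Acyc {V : Type} (A : V → V → Prop) : Prop :=
  ∀ v, ¬ Relation.TransGen A v v

/-- The directed tree of statement 12: edges v₁→v₂, v₁→v₃, v₁→v₄, v₅→v₂, v₆→v₃,
v₇→v₄, with vᵢ represented by `i - 1 : Fin 7`. -/
def T12 (a b : Fin 7) : Prop :=
  (a, b) ∈ ({(0, 1), (0, 2), (0, 3), (4, 1), (5, 2), (6, 3)} : Set (Fin 7 × Fin 7))

/-- The graph `S` of statement 12, with edges v₁v₅, v₁v₆, v₁v₇, v₂v₆, v₂v₇,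
v₃v₅, v₃v₇, v₄v₅, v₄v₆. -/
def S12 : SimpleGraph (Fin 7) :=
  SimpleGraph.fromEdgeSet
    {s(0, 4), s(0, 5), s(0, 6), s(1, 5), s(1, 6), s(2, 4), s(2, 6), s(3, 4), s(3, 5)}

namespace Acyc

variable {V : Type} {A : V → V → Prop} {a b c d : V}

theorem not_cycle3 (h : Acyc A) (hab : A a b) (hbc : A b c) : ¬ A c a := fun hca =>
  h a (((Relation.TransGen.single hab).tail hbc).tail hca)

theorem not_cycle4 (h : Acyc A) (hab : A a b) (hbc : A b c) (hcd : A c d) : ¬ A d a :=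
  fun hda => h a ((((Relation.TransGen.single hab).tail hbc).tail hcd).tail hda)

end Acyc

namespace IsDirecting

variable {V : Type} {S : SimpleGraph V} {D T : V → V → Prop} {r x y x' y' : V}

theorem rel_of_not_rel (hD : IsDirecting S D) (hxy : S.Adj x y) (h : ¬ D x y) : D y x := by
  by_contra h'
  exact h ((hD.2 x y hxy).mpr h')

theorem rel_iff_rel_of_acyc (hD : IsDirecting S D) (hA : Acyc fun a b => D a b ∨ T a b)
    (hB : Acyc fun a b => D b a ∨ T a b) (hrx : T r x) (hry : S.Adj r y) (hxy : S.Adj x y) :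
    D x y ↔ D r y := by
  constructor
  · intro hDxy
    by_contra hDry
    exact hA.not_cycle3 (Or.inr hrx) (Or.inl hDxy) (Or.inl (hD.rel_of_not_rel hry hDry))
  · intro hDry
    by_contra hDxy
    exact hB.not_cycle3 (Or.inr hrx) (Or.inl (hD.rel_of_not_rel hxy hDxy)) (Or.inl hDry)

theorem rel_iff_not_rel_of_acyc (hD : IsDirecting S D) (hA : Acyc fun a b => D a b ∨ T a b)
    (hB : Acyc fun a b => D b a ∨ T a b) (hyx : T y x) (hy'x' : T y' x') (hxy' : S.Adj x y')
    (hx'y : S.Adj x' y) : D x y' ↔ ¬ D x' y := by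
  constructor
  · exact fun hDxy' hDx'y => hA.not_cycle4 (Or.inr hyx) (Or.inl hDxy') (Or.inr hy'x') (Or.inl hDx'y)
  · intro hDx'y
    by_contra hDxy'
    exact hB.not_cycle4 (Or.inr hyx) (Or.inl (hD.rel_of_not_rel hxy' hDxy')) (Or.inr hy'x')
      (Or.inl (hD.rel_of_not_rel hx'y hDx'y))

theorem rel_iff_not_rel_of_square (hD : IsDirecting S D) (hA : Acyc fun a b => D a b ∨ T a b)
    (hB : Acyc fun a b => D b a ∨ T a b) (hrx : T r x) (hrx' : T r x') (hyx : T y x)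
    (hy'x' : T y' x') (hxy' : S.Adj x y') (hx'y : S.Adj x' y) (hry : S.Adj r y)
    (hry' : S.Adj r y') : D r y' ↔ ¬ D r y := by
  rw [← hD.rel_iff_rel_of_acyc hA hB hrx hry' hxy', ← hD.rel_iff_rel_of_acyc hA hB hrx' hry hx'y]
  exact hD.rel_iff_not_rel_of_acyc hA hB hyx hy'x' hxy' hx'y

end IsDirecting

instance : IsTrans (Fin 7) T12 where
  trans a b c hab hbc := by
    simp only [T12, Set.mem_insert_iff, Set.mem_singleton_iff, Prod.ext_iff] at hab hbc
    omega

theorem not_T12_of_S12_adj {a b : Fin 7} (h : S12.Adj a b) : ¬ T12 a b := by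
  fin_cases a <;> fin_cases b <;> simp_all [S12, T12]

/-- for every edge of `S12` the path of the tree `T12⁻` joining its
ends is not a directed path of `T12` (equivalently, neither end reaches the other
in `T12`); yet no directing `S'` of `S12` makes both `S' ∪ T12` and `←S' ∪ T12`
acyclic.  So the planarity hypothesis of the planar theorem cannot be dropped. -/
theorem stmt12 :
    (∀ a b, S12.Adj a b → ¬ Relation.TransGen T12 a b) ∧
    ¬ ∃ D : Fin 7 → Fin 7 → Prop, IsDirecting S12 D ∧
        Acyc (fun a b => D a b ∨ T12 a b) ∧ Acyc (fun a b => D b a ∨ T12 a b) := by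
  refine ⟨fun a b hab => ?_, ?_⟩
  · rw [Relation.transGen_eq_self]
    exact not_T12_of_S12_adj hab
  · rintro ⟨D, hD, hA, hB⟩
    have h54 : D 0 5 ↔ ¬ D 0 4 := by
      apply hD.rel_iff_not_rel_of_square hA hB (x := 1) (x' := 2) <;> simp [T12, S12]
    have h65 : D 0 6 ↔ ¬ D 0 5 := by
      apply hD.rel_iff_not_rel_of_square hA hB (x := 2) (x' := 3) <;> simp [T12, S12]
    have h46 : D 0 4 ↔ ¬ D 0 6 := by
      apply hD.rel_iff_not_rel_of_square hA hB (x := 3) (x' := 1) <;> simp [T12, S12]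
    tauto
end

section
/- Let T be the directed tree with vertices v₁,…,v₅ and edges v₁→v₂, v₃→v₂, v₃→v₄, v₅→v₄, and S the graph on the same vertices with edges v₁v₃, v₁v₄, v₂v₄, v₂v₅, v₃v₅. Then for every edge of S the tree path joining its ends is not a directed path of T; but there is no directing S′ of S such that S′ ∪ T and ←S′ ∪ T are acyclic and no edge of S′ has head v₃. -/
/-- The directed tree of statement 13: edges v₁→v₂, v₃→v₂, v₃→v₄, v₅→v₄, with
vᵢ represented by `i - 1 : Fin 5` (the underlying graph is the path v₁v₂v₃v₄v₅). -/
def T13 (a b : Fin 5) : Prop :=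
  (a, b) ∈ ({(0, 1), (2, 1), (2, 3), (4, 3)} : Set (Fin 5 × Fin 5))

/-- The graph `S` of statement 13, with edges v₁v₃, v₁v₄, v₂v₄, v₂v₅, v₃v₅. -/
def S13 : SimpleGraph (Fin 5) :=
  SimpleGraph.fromEdgeSet {s(0, 2), s(0, 3), s(1, 3), s(1, 4), s(2, 4)}

lemma T13_iff (a b : Fin 5) : T13 a b ↔
    (a = 0 ∧ b = 1) ∨ (a = 2 ∧ b = 1) ∨ (a = 2 ∧ b = 3) ∨ (a = 4 ∧ b = 3) := by
  simp [T13, Prod.ext_iff]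

lemma T13_no_two (a b c : Fin 5) : T13 a b → T13 b c → False := by
  simp only [T13_iff]
  rintro (⟨_,rfl⟩|⟨_,rfl⟩|⟨_,rfl⟩|⟨_,rfl⟩) (⟨h,_⟩|⟨h,_⟩|⟨h,_⟩|⟨h,_⟩) <;> exact absurd h (by decide)

lemma transGen_T13 {a b : Fin 5} (h : Relation.TransGen T13 a b) : T13 a b := by
  induction h with
  | single h => exact h
  | tail _ h2 ih => exact absurd h2 (fun h2 => T13_no_two _ _ _ ih h2)

lemma t01 : T13 0 1 := by rw [T13_iff]; decide
lemma t21 : T13 2 1 := by rw [T13_iff]; decide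
lemma t23 : T13 2 3 := by rw [T13_iff]; decide
lemma t43 : T13 4 3 := by rw [T13_iff]; decide

lemma adj02 : S13.Adj 0 2 := by simp [S13, SimpleGraph.fromEdgeSet_adj, Sym2.eq_iff]
lemma adj24 : S13.Adj 2 4 := by simp [S13, SimpleGraph.fromEdgeSet_adj, Sym2.eq_iff]
lemma adj14 : S13.Adj 1 4 := by simp [S13, SimpleGraph.fromEdgeSet_adj, Sym2.eq_iff]
lemma adj03 : S13.Adj 0 3 := by simp [S13, SimpleGraph.fromEdgeSet_adj, Sym2.eq_iff]

lemma nadj01 : ¬ S13.Adj 0 1 := by simp [S13, SimpleGraph.fromEdgeSet_adj, Sym2.eq_iff]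
lemma nadj21 : ¬ S13.Adj 2 1 := by simp [S13, SimpleGraph.fromEdgeSet_adj, Sym2.eq_iff]
lemma nadj23 : ¬ S13.Adj 2 3 := by simp [S13, SimpleGraph.fromEdgeSet_adj, Sym2.eq_iff]
lemma nadj43 : ¬ S13.Adj 4 3 := by simp [S13, SimpleGraph.fromEdgeSet_adj, Sym2.eq_iff]

/-- for every edge of `S13` the tree path joining its ends is not
a directed path of `T13` (equivalently, neither end reaches the other in `T13`);
yet for `t = v₃` there is no directing `S'` of `S13` with `S' ∪ T13` and
`←S' ∪ T13` acyclic and no edge of `S'` having head `t`. -/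
theorem stmt13 :
    (∀ a b, S13.Adj a b → ¬ Relation.TransGen T13 a b) ∧
    ¬ ∃ D : Fin 5 → Fin 5 → Prop, IsDirecting S13 D ∧
        Acyc (fun a b => D a b ∨ T13 a b) ∧ Acyc (fun a b => D b a ∨ T13 a b) ∧
        ∀ a, ¬ D a 2 := by
  constructor
  · intro a b hadj htg
    have ht := transGen_T13 htg
    rw [T13_iff] at ht
    rcases ht with ⟨ha, hb⟩ | ⟨ha, hb⟩ | ⟨ha, hb⟩ | ⟨ha, hb⟩ <;> subst ha <;> subst hb
    · exact nadj01 hadj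
    · exact nadj21 hadj
    · exact nadj23 hadj
    · exact nadj43 hadj
  · rintro ⟨D, ⟨hsub, hiff⟩, hA, hB, h2⟩
    have hd20 : D 2 0 := (hiff 2 0 adj02.symm).mpr (h2 0)
    have hd24 : D 2 4 := (hiff 2 4 adj24).mpr (h2 4)
    by_cases hd41 : D 4 1
    · -- cycle 1 → 4 → 2 → 1 in ←S' ∪ T
      exact hB 1 (Relation.TransGen.head (Or.inl hd41)
        (Relation.TransGen.head (Or.inl hd24)
          (Relation.TransGen.single (Or.inr t21))))
    · have hd14 : D 1 4 := (hiff 1 4 adj14).mpr hd41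
      by_cases hd03 : D 0 3
      · -- cycle 2 → 3 → 0 → 2 in ←S' ∪ T
        exact hB 2 (Relation.TransGen.head (Or.inr t23)
          (Relation.TransGen.head (Or.inl hd03)
            (Relation.TransGen.single (Or.inl hd20))))
      · have hd30 : D 3 0 := (hiff 3 0 adj03.symm).mpr hd03
        -- cycle 3 → 0 → 1 → 4 → 3 in S' ∪ T
        exact hA 3 (Relation.TransGen.head (Or.inl hd30)
          (Relation.TransGen.head (Or.inr t01)
            (Relation.TransGen.head (Or.inl hd14)
              (Relation.TransGen.single (Or.inr t43)))))
end

section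
/- Let S be a graph and T a directed tree, compatible (same vertex set, disjoint edge sets), and suppose for every edge e of S the path of T joining the ends of e is not a directed path of T. Suppose T⁻ is a path, i.e., T is a directed tree whose underlying graph is a path. Then there is a directing of S, forming digraph S′, such that S′ ∪ T and ←S′ ∪ T are both acyclic. -/
/-!
Number the vertices `0, …, n` along the path `T⁻` and let `s t` record whether the edge between
`t` and `t + 1` points forwards. An `S`-edge between positions `i < j` cannot lie on a monotone
stretch of the path, so the orientation turns strictly between `i` and `j`. Cutting the path into
its maximal monotone runs and ranking each vertex first by its run, then by its position along `T`
inside the run, gives a topological order of `T` in which every `S`-edge goes from left to right;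
with the runs taken from right to left instead, every `S`-edge goes from right to left. Directing
`S` by the first order, `S' ∪ T` is acyclic by the first ranking and `←S' ∪ T` by the second.
-/

namespace OrientedPath

variable (s : ℕ → Bool)

/-- The edge `t` lies in the monotone run number `turns s t`. -/
def turns (t : ℕ) : ℕ := ∑ u ∈ Finset.range t, if s u = s (u + 1) then 0 else 1

/-- A turning vertex lies on two runs; it is ranked in the run of its adjacent backward edge, where
it is the `T`-last vertex if it is a sink and the `T`-first one if it is a source. -/
def edgeAt (i : ℕ) : ℕ := if s i then i - 1 else i

def rank (i : ℕ) : ℕ ×ₗ ℤ :=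
  toLex (turns s (edgeAt s i), if s (edgeAt s i) then (i : ℤ) else -i)

variable {s}

lemma turns_succ (t : ℕ) : turns s (t + 1) = turns s t + if s t = s (t + 1) then 0 else 1 :=
  Finset.sum_range_succ _ _

lemma turns_mono : Monotone (turns s) :=
  monotone_nat_of_le_succ fun t => by rw [turns_succ]; omega

lemma rank_lt_rank_succ {t : ℕ} (ht : s t = true) : rank s t < rank s (t + 1) := by
  have h := turns_succ (s := s) t
  rcases t with _ | u
  · cases h1 : s 1 <;> simp_all [rank, edgeAt, Prod.Lex.toLex_lt_toLex]
  · have h' := turns_succ (s := s) u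
    cases h1 : s (u + 2) <;> cases h0 : s u <;> simp_all [rank, edgeAt, Prod.Lex.toLex_lt_toLex]

lemma rank_succ_lt_rank {t : ℕ} (ht : s t = false) : rank s (t + 1) < rank s t := by
  have h := turns_succ (s := s) t
  cases h1 : s (t + 1) <;> simp_all [rank, edgeAt, Prod.Lex.toLex_lt_toLex]

lemma rank_lt_of_turn {i u j : ℕ} (hi : i ≤ u) (hj : u + 1 < j) (hu : s u ≠ s (u + 1)) :
    rank s i < rank s j := by
  have h := turns_succ (s := s) u
  rw [if_neg hu] at h
  have hi' : turns s (edgeAt s i) ≤ turns s u :=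
    turns_mono (by unfold edgeAt; split <;> omega)
  have hj' : turns s (u + 1) ≤ turns s (edgeAt s j) :=
    turns_mono (by unfold edgeAt; split <;> omega)
  exact Prod.Lex.toLex_lt_toLex.2 (Or.inl (by omega))

lemma exists_turn_of_ne {i k : ℕ} (hik : i ≤ k) (h : s i ≠ s k) :
    ∃ u, i ≤ u ∧ u < k ∧ s u ≠ s (u + 1) := by
  induction k, hik using Nat.le_induction with
  | base => exact absurd rfl h
  | succ k hik ih =>
    by_cases hk : s i = s k
    · exact ⟨k, hik, k.lt_succ_self, hk ▸ h⟩
    · obtain ⟨u, hiu, huk, hu⟩ := ih hk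
      exact ⟨u, hiu, huk.trans k.lt_succ_self, hu⟩

end OrientedPath

open OrientedPath

lemma acyc_of_forall_lt {V : Type} {α : Type*} [Preorder α] {A : V → V → Prop} (f : V → α)
    (h : ∀ a b, A a b → f a < f b) : Acyc A := fun _ hv =>
  lt_irrefl _ (Relation.transGen_eq_self (r := (· < · : α → α → Prop)) ▸ hv.lift f h)

lemma transGen_of_forall_succ {R : ℕ → ℕ → Prop} {i j : ℕ} (hij : i < j)
    (h : ∀ t, i ≤ t → t < j → R t (t + 1)) : Relation.TransGen R i j := by
  induction j, hij using Nat.le_induction with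
  | base => exact .single (h i le_rfl i.lt_succ_self)
  | succ j hij ih =>
    exact .tail (ih fun t h1 h2 => h t h1 (h2.trans j.lt_succ_self)) (h j (by omega) j.lt_succ_self)

theorem exists_directing_of_rankings {V : Type} {α β : Type*} [Preorder α] [Preorder β]
    {S : SimpleGraph V} {T : V → V → Prop} (f : V → α) (g : V → β)
    (hT : ∀ a b, T a b → f a < f b ∧ g a < g b)
    (hS : ∀ a b, S.Adj a b → f a < f b ∧ g b < g a ∨ f b < f a ∧ g a < g b) :
    ∃ D : V → V → Prop, IsDirecting S D ∧
      Acyc (fun a b => D a b ∨ T a b) ∧ Acyc (fun a b => D b a ∨ T a b) := by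
  refine ⟨fun a b => S.Adj a b ∧ f a < f b, ⟨fun a b h => h.1, fun a b hab => ?_⟩, ?_, ?_⟩
  · rcases hS a b hab with h | h
    · simp [hab, h.1, h.1.not_gt]
    · simp [hab.symm, h.1, h.1.not_gt]
  · exact acyc_of_forall_lt f fun a b h => h.elim And.right fun h => (hT a b h).1
  · refine acyc_of_forall_lt g fun a b h => h.elim (fun ⟨hba, hlt⟩ => ?_) fun h => (hT a b h).2
    exact ((hS b a hba).resolve_right fun h => h.1.not_gt hlt).2

theorem exists_directing_of_turns {V : Type} {S : SimpleGraph V} {T : V → V → Prop}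
    {q : V → ℕ} (hq : Function.Injective q) (s : ℕ → Bool)
    (hT : ∀ a b, T a b → q b = q a + 1 ∧ s (q a) = true ∨ q a = q b + 1 ∧ s (q b) = false)
    (hturn : ∀ a b, S.Adj a b → q a < q b → ∃ u, q a ≤ u ∧ u + 1 < q b ∧ s u ≠ s (u + 1)) :
    ∃ D : V → V → Prop, IsDirecting S D ∧
      Acyc (fun a b => D a b ∨ T a b) ∧ Acyc (fun a b => D b a ∨ T a b) := by
  have hspan : ∀ a b, S.Adj a b → q a < q b →
      rank s (q a) < rank s (q b) ∧ rank (! s ·) (q a) < rank (! s ·) (q b) := by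
    intro a b hab hlt
    obtain ⟨u, hau, hub, hu⟩ := hturn a b hab hlt
    exact ⟨rank_lt_of_turn hau hub hu, rank_lt_of_turn hau hub (by simpa using hu)⟩
  -- `rank (! s ·)` has the same runs as `rank s` but runs through each of them against `T`;
  -- its order dual is the right-to-left ranking.
  refine exists_directing_of_rankings (fun v => rank s (q v))
    (fun v => OrderDual.toDual (rank (! s ·) (q v))) (fun a b hab => ?_) (fun a b hab => ?_)
  · simp only [OrderDual.toDual_lt_toDual]
    rcases hT a b hab with ⟨hpos, hs⟩ | ⟨hpos, hs⟩ <;> rw [hpos]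
    · exact ⟨rank_lt_rank_succ hs, rank_succ_lt_rank (by simpa using hs)⟩
    · exact ⟨rank_succ_lt_rank hs, rank_lt_rank_succ (by simpa using hs)⟩
  · rcases lt_or_gt_of_ne (hq.ne hab.ne) with h | h
    · exact .inl (hspan a b hab h)
    · exact .inr (hspan b a hab.symm h)

lemma exists_turn_of_not_transGen {V : Type} {T : V → V → Prop} {P : ℕ → V} {s : ℕ → Bool}
    {n : ℕ} (hfwd : ∀ t < n, s t = true → T (P t) (P (t + 1)))
    (hbwd : ∀ t < n, s t = false → T (P (t + 1)) (P t)) {i j : ℕ} (hij : i < j) (hj : j ≤ n)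
    (hto : ¬ Relation.TransGen T (P i) (P j)) (hfrom : ¬ Relation.TransGen T (P j) (P i)) :
    ∃ u, i ≤ u ∧ u + 1 < j ∧ s u ≠ s (u + 1) := by
  by_contra! hno
  have hconst : ∀ t, i ≤ t → t < j → s t = s i := fun t hit htj => by
    by_contra hne
    obtain ⟨u, hiu, hut, hu⟩ := exists_turn_of_ne hit (Ne.symm hne)
    exact hu (hno u hiu (by omega))
  cases hsi : s i
  · refine hfrom (Relation.transGen_swap.1 ((transGen_of_forall_succ hij fun t hit htj => ?_).lift P
      fun _ _ h => h))
    exact hbwd t (by omega) ((hconst t hit htj).trans hsi)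
  · refine hto ((transGen_of_forall_succ hij fun t hit htj => ?_).lift P fun _ _ h => h)
    exact hfwd t (by omega) ((hconst t hit htj).trans hsi)

theorem exists_directing_of_path {V : Type} {S : SimpleGraph V} {T : V → V → Prop}
    (hirr : ∀ a, ¬ T a a) (hasym : ∀ a b, T a b → ¬ T b a) {n : ℕ} {P : ℕ → V} {q : V → ℕ}
    (hPq : Function.LeftInverse P q) (hqP : ∀ t ≤ n, q (P t) = t) (hq : ∀ v, q v ≤ n)
    (hpath : ∀ a b, (SimpleGraph.fromRel T).Adj a b ↔
      ∃ t < n, (a = P t ∧ b = P (t + 1)) ∨ (b = P t ∧ a = P (t + 1)))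
    (hS : ∀ a b, S.Adj a b → ¬ Relation.TransGen T a b) :
    ∃ D : V → V → Prop, IsDirecting S D ∧
      Acyc (fun a b => D a b ∨ T a b) ∧ Acyc (fun a b => D b a ∨ T a b) := by
  classical
  let s : ℕ → Bool := fun t => T (P t) (P (t + 1))
  have hbwd : ∀ t < n, s t = false → T (P (t + 1)) (P t) := fun t ht hst => by
    have := ((hpath _ _).2 ⟨t, ht, .inl ⟨rfl, rfl⟩⟩).2
    simp_all [s]
  refine exists_directing_of_turns hPq.injective s (fun a b hab => ?_) (fun a b hab hlt => ?_)
  · obtain ⟨t, ht, ⟨rfl, rfl⟩ | ⟨rfl, rfl⟩⟩ := (hpath a b).1 ⟨fun h => hirr a (h ▸ hab), .inl hab⟩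
    <;> rw [hqP t ht.le, hqP (t + 1) ht]
    · exact .inl ⟨rfl, by simpa [s] using hab⟩
    · exact .inr ⟨rfl, by simpa [s] using hasym _ _ hab⟩
  · exact exists_turn_of_not_transGen (fun t _ hst => by simpa [s] using hst) hbwd hlt (hq b)
      (by simpa only [hPq a, hPq b] using hS a b hab)
      (by simpa only [hPq a, hPq b] using hS b a hab.symm)

theorem stmt15_general {V : Type} (S : SimpleGraph V) (T : V → V → Prop)
    (hirr : ∀ a, ¬ T a a) (hasym : ∀ a b, T a b → ¬ T b a)
    -- the underlying graph of T is a path through all the vertices: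
    (n : ℕ) (p : Fin (n + 1) → V) (hbij : Function.Bijective p)
    (hpathT : ∀ a b, (SimpleGraph.fromRel T).Adj a b ↔
      ∃ i : Fin n, (a = p i.castSucc ∧ b = p i.succ) ∨ (b = p i.castSucc ∧ a = p i.succ))
    -- no S-edge has its ends joined by a directed path of T:
    (hS : ∀ a b, S.Adj a b → ¬ Relation.TransGen T a b) :
    ∃ D : V → V → Prop, IsDirecting S D ∧
      Acyc (fun a b => D a b ∨ T a b) ∧ Acyc (fun a b => D b a ∨ T a b) := by
  let e := Equiv.ofBijective p hbij
  have hcast : ∀ (t : ℕ) (ht : t < n + 1), Fin.ofNat (n + 1) t = ⟨t, ht⟩ := fun t ht =>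
    Fin.ext (Nat.mod_eq_of_lt ht)
  refine exists_directing_of_path hirr hasym (P := fun t => e (Fin.ofNat (n + 1) t))
    (q := fun v => e.symm v) (fun v => by simp) (fun t ht => by simpa using ht)
    (fun v => Fin.is_le _) (fun a b => ?_) hS
  rw [hpathT, Fin.exists_iff]
  refine exists_congr fun t => ⟨fun ⟨ht, h⟩ => ⟨ht, ?_⟩, fun ⟨ht, h⟩ => ⟨ht, ?_⟩⟩ <;>
    simpa only [e, Equiv.ofBijective_apply, hcast t (by omega), hcast (t + 1) (by omega),
      Fin.castSucc_mk, Fin.succ_mk] using h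

/-- let `S` be a graph and `T` a compatible directed tree whose
underlying graph is a (Hamiltonian) path, such that for every edge of `S` the
path of `T` joining its ends is not a directed path of `T` (equivalently neither
end reaches the other in `T`).  Then `S` has a directing `S'` with `S' ∪ T` and
`←S' ∪ T` both acyclic. -/
theorem stmt15 {V : Type} [Fintype V] (S : SimpleGraph V) (T : V → V → Prop)
    (hirr : ∀ a, ¬ T a a) (hasym : ∀ a b, T a b → ¬ T b a)
    (hcompat : ∀ a b, T a b → ¬ S.Adj a b)
    -- the underlying graph of T is a path through all the vertices:
    (n : ℕ) (p : Fin (n + 1) → V) (hbij : Function.Bijective p)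
    (hpathT : ∀ a b, (SimpleGraph.fromRel T).Adj a b ↔
      ∃ i : Fin n, (a = p i.castSucc ∧ b = p i.succ) ∨ (b = p i.castSucc ∧ a = p i.succ))
    -- no S-edge has its ends joined by a directed path of T:
    (hS : ∀ a b, S.Adj a b → ¬ Relation.TransGen T a b) :
    ∃ D : V → V → Prop, IsDirecting S D ∧
      Acyc (fun a b => D a b ∨ T a b) ∧ Acyc (fun a b => D b a ∨ T a b) :=
  stmt15_general S T hirr hasym n p hbij hpathT hS
end

section
/- Let S, T be compatible digraphs such that every directed cut of G = S ∪ T has at least two edges in E(S), S⁻ is a tree, and there is an outset X of T with D_S(X) = {s} where s ∈ D⁻_S(X). Let G₁ = G/s (contract s), and let S₁ be the digraph of remaining S-edges. If A, B partition E(S₁) into two dijoins of G₁, then A and B are also dijoins of G. -/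
/-- The underlying undirected adjacency of a digraph with edges `E`. -/
def adjOf {V E : Type} (tl hd : E → V) (a b : V) : Prop :=
  ∃ e : E, (tl e = a ∧ hd e = b) ∨ (tl e = b ∧ hd e = a)

/-- The underlying (multi)graph is connected. -/
def UConnected {V E : Type} (tl hd : E → V) : Prop :=
  ∀ a b : V, Relation.ReflTransGen (adjOf tl hd) a b

/-- `D` is a dijoin of `G/s`: the directed cuts of `G/s` are those of `G` at outsets not
separating the ends of `s`. -/
def IsContractDijoin {V E : Type} (tl hd : E → V) (s : E) (D : Set E) : Prop :=
  ∀ Y : Set V, IsOutset tl hd Y → (tl s ∈ Y ↔ hd s ∈ Y) → (D ∩ dicut tl hd Y).Nonempty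

namespace IsContractDijoin

variable {V E : Type} {tl hd : E → V} {s : E} {D : Set E} {X Y : Set V}

lemma mem_dicut_of_inter_eq_empty (hD : IsContractDijoin tl hd s D)
    (hY : IsOutset tl hd Y) (hDY : D ∩ dicut tl hd Y = ∅) : s ∈ dicut tl hd Y := by
  by_contra hsY
  have hsep : tl s ∈ Y ↔ hd s ∈ Y := ⟨fun h => not_not.1 fun h' => hsY ⟨h, h'⟩, hY.2.2 s⟩
  exact (hD Y hY hsep).ne_empty hDY

lemma eq_compl_of_inter_eq_empty (hD : IsContractDijoin tl hd s D)
    (hX : ∀ e, hd e ∈ X → tl e ∉ X → e = s) (hs : hd s ∈ X ∧ tl s ∉ X)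
    (hDX : ∀ e ∈ D, tl e ∈ X → hd e ∈ X) (hY : IsOutset tl hd Y)
    (hDY : D ∩ dicut tl hd Y = ∅) : Y = Xᶜ := by
  have hsY := hD.mem_dicut_of_inter_eq_empty hY hDY
  have hmiss : ∀ e ∈ D, tl e ∈ Y → hd e ∈ Y := fun e he hte =>
    not_not.1 fun hhe => (Set.eq_empty_iff_forall_notMem.1 hDY) e ⟨he, hte, hhe⟩
  have hinter : Y ∩ X = ∅ := by
    by_contra hne
    have hout : IsOutset tl hd (Y ∩ X) := by
      refine ⟨hne, fun h => hsY.2 (h ▸ Set.mem_univ (hd s)).1, fun e he => ⟨hY.2.2 e he.1, ?_⟩⟩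
      by_contra hte
      obtain rfl := hX e he.2 hte
      exact hsY.2 he.1
    obtain ⟨e, heD, hte, hhe⟩ := hD _ hout ⟨fun h => absurd h.2 hs.2, fun h => absurd h.1 hsY.2⟩
    exact hhe ⟨hmiss e heD hte.1, hDX e heD hte.2⟩
  have hunion : Y ∪ X = Set.univ := by
    by_contra hne
    have hout : IsOutset tl hd (Y ∪ X) := by
      refine ⟨Set.nonempty_iff_ne_empty.1 ⟨_, Or.inl hsY.1⟩, hne, fun e he => ?_⟩
      rcases he with he | he
      · exact Or.inl (hY.2.2 e he)
      · by_contra hte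
        obtain rfl := hX e he fun h => hte (Or.inr h)
        exact hte (Or.inl hsY.1)
    obtain ⟨e, heD, hte, hhe⟩ := hD _ hout ⟨fun _ => Or.inr hs.1, fun _ => Or.inl hsY.1⟩
    rcases hte with hte | hte
    · exact hhe (Or.inl (hmiss e heD hte))
    · exact hhe (Or.inr (hDX e heD hte))
  ext v
  refine ⟨fun hv hvX => hinter.subset ⟨hv, hvX⟩, fun hv => ?_⟩
  exact (hunion.symm ▸ Set.mem_univ v : v ∈ Y ∪ X).resolve_right hv

lemma isDijoin (hD : IsContractDijoin tl hd s D)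
    (hcut : ∀ Y, IsOutset tl hd Y → ¬ (dicut tl hd Y).Subsingleton)
    (hX : ∀ e, hd e ∈ X → tl e ∉ X → e = s) (hs : hd s ∈ X ∧ tl s ∉ X)
    (hDX : ∀ e ∈ D, tl e ∈ X → hd e ∈ X) : IsDijoin tl hd D := by
  intro Y hY
  by_contra hDY
  rw [Set.not_nonempty_iff_eq_empty] at hDY
  obtain rfl := hD.eq_compl_of_inter_eq_empty hX hs hDX hY hDY
  refine hcut _ hY ((Set.subsingleton_singleton (a := s)).anti fun e he => ?_)
  exact hX e (not_not.1 he.2) he.1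

end IsContractDijoin

lemma isContractDijoin_image_inl {V ES ET : Type} {tS hS : ES → V} {tT hT : ET → V} {s : ES}
    {D : Set ES}
    (hD : ∀ Y : Set V, Y ≠ ∅ → Y ≠ Set.univ → (tS s ∈ Y ↔ hS s ∈ Y) →
      (∀ e : ES ⊕ ET, Sum.elim hS hT e ∈ Y → Sum.elim tS tT e ∈ Y) →
      ∃ e ∈ D, tS e ∈ Y ∧ hS e ∉ Y) :
    IsContractDijoin (Sum.elim tS tT) (Sum.elim hS hT) (Sum.inl s) (Sum.inl '' D) := by
  intro Y hY hsep
  obtain ⟨e, he, hcross⟩ := hD Y hY.1 hY.2.1 hsep hY.2.2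
  exact ⟨Sum.inl e, ⟨e, he, rfl⟩, hcross⟩

theorem stmt19_general {V ES ET : Type}
    (tS hS : ES → V) (tT hT : ET → V)
    -- every directed cut of G has at least two S-edges:
    (hcut2 : ∀ X : Set V, IsOutset (Sum.elim tS tT) (Sum.elim hS hT) X →
      ∃ e f : ES, e ≠ f ∧
        (Sum.inl e : ES ⊕ ET) ∈ dicut (Sum.elim tS tT) (Sum.elim hS hT) X ∧
        (Sum.inl f : ES ⊕ ET) ∈ dicut (Sum.elim tS tT) (Sum.elim hS hT) X)
    -- X is an outset of T with D_S(X) = {s} and s ∈ D⁻_S(X):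
    (X : Set V) (hX : IsOutset tT hT X) (s : ES)
    (hs : hS s ∈ X ∧ tS s ∉ X)
    (honly : ∀ e : ES, e ≠ s → (tS e ∈ X ↔ hS e ∈ X))
    -- A, B partition E(S) \ {s} into two dijoins of G/s:
    (A B : Set ES)
    (hA : ∀ Y : Set V, Y ≠ ∅ → Y ≠ Set.univ → (tS s ∈ Y ↔ hS s ∈ Y) →
      (∀ e : ES ⊕ ET, Sum.elim hS hT e ∈ Y → Sum.elim tS tT e ∈ Y) →
      ∃ e ∈ A, tS e ∈ Y ∧ hS e ∉ Y)
    (hB : ∀ Y : Set V, Y ≠ ∅ → Y ≠ Set.univ → (tS s ∈ Y ↔ hS s ∈ Y) →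
      (∀ e : ES ⊕ ET, Sum.elim hS hT e ∈ Y → Sum.elim tS tT e ∈ Y) →
      ∃ e ∈ B, tS e ∈ Y ∧ hS e ∉ Y) :
    IsDijoin (Sum.elim tS tT) (Sum.elim hS hT) (Sum.inl '' A) ∧
    IsDijoin (Sum.elim tS tT) (Sum.elim hS hT) (Sum.inl '' B) := by
  have hcut : ∀ Y, IsOutset (Sum.elim tS tT) (Sum.elim hS hT) Y →
      ¬ (dicut (Sum.elim tS tT) (Sum.elim hS hT) Y).Subsingleton := fun Y hY hsub => by
    obtain ⟨e, f, hef, he, hf⟩ := hcut2 Y hY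
    exact hef (Sum.inl_injective (hsub he hf))
  have hXs : ∀ e : ES ⊕ ET, Sum.elim hS hT e ∈ X → Sum.elim tS tT e ∉ X → e = Sum.inl s := by
    rintro (e | e) hhe hte
    · by_contra hes
      exact hte ((honly e fun h => hes (congrArg Sum.inl h)).2 hhe)
    · exact absurd (hX.2.2 e hhe) hte
  have hSX : ∀ D : Set ES, ∀ e ∈ (Sum.inl '' D : Set (ES ⊕ ET)),
      Sum.elim tS tT e ∈ X → Sum.elim hS hT e ∈ X := by
    rintro D _ ⟨e, -, rfl⟩ hte
    exact (honly e fun h => hs.2 (h ▸ hte)).1 hte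
  exact ⟨(isContractDijoin_image_inl hA).isDijoin hcut hXs hs (hSX A),
    (isContractDijoin_image_inl hB).isDijoin hcut hXs hs (hSX B)⟩

/-- `S, T` compatible digraphs (`S`-edges `ES`, `T`-edges `ET`,
`G = S ∪ T` with edge type `ES ⊕ ET`), every directed cut of `G` has at least
two `S`-edges, `S⁻` is a tree, and `X` is an outset of `T` whose only crossing
`S`-edge is `s`, which enters `X`.  If `A, B` partition `E(S) \ {s}` into two
dijoins of `G₁ = G/s` (cuts of `G₁` = cuts of `G` at sets not separating the
ends of `s`), then `A` and `B` are dijoins of `G` itself. -/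
theorem stmt19 {V ES ET : Type} [Fintype V] [Fintype ES] [Fintype ET]
    (tS hS : ES → V) (tT hT : ET → V)
    -- S⁻ is a tree:
    (hconn : UConnected tS hS)
    (hcard : Fintype.card ES + 1 = Fintype.card V)
    -- every directed cut of G has at least two S-edges:
    (hcut2 : ∀ X : Set V, IsOutset (Sum.elim tS tT) (Sum.elim hS hT) X →
      ∃ e f : ES, e ≠ f ∧
        (Sum.inl e : ES ⊕ ET) ∈ dicut (Sum.elim tS tT) (Sum.elim hS hT) X ∧
        (Sum.inl f : ES ⊕ ET) ∈ dicut (Sum.elim tS tT) (Sum.elim hS hT) X)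
    -- X is an outset of T with D_S(X) = {s} and s ∈ D⁻_S(X):
    (X : Set V) (hX : IsOutset tT hT X) (s : ES)
    (hs : hS s ∈ X ∧ tS s ∉ X)
    (honly : ∀ e : ES, e ≠ s → (tS e ∈ X ↔ hS e ∈ X))
    -- A, B partition E(S) \ {s} into two dijoins of G/s:
    (A B : Set ES)
    (hU : A ∪ B = {e : ES | e ≠ s}) (hI : A ∩ B = ∅)
    (hA : ∀ Y : Set V, Y ≠ ∅ → Y ≠ Set.univ → (tS s ∈ Y ↔ hS s ∈ Y) →
      (∀ e : ES ⊕ ET, Sum.elim hS hT e ∈ Y → Sum.elim tS tT e ∈ Y) →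
      ∃ e ∈ A, tS e ∈ Y ∧ hS e ∉ Y)
    (hB : ∀ Y : Set V, Y ≠ ∅ → Y ≠ Set.univ → (tS s ∈ Y ↔ hS s ∈ Y) →
      (∀ e : ES ⊕ ET, Sum.elim hS hT e ∈ Y → Sum.elim tS tT e ∈ Y) →
      ∃ e ∈ B, tS e ∈ Y ∧ hS e ∉ Y) :
    IsDijoin (Sum.elim tS tT) (Sum.elim hS hT) (Sum.inl '' A) ∧
    IsDijoin (Sum.elim tS tT) (Sum.elim hS hT) (Sum.inl '' B) :=
  stmt19_general tS hS tT hT hcut2 X hX s hs honly A B hA hB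
end
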